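/- arXiv:1008.1966 — 3 statements merged into one kernel-verified Lean document; each statement's English description precedes it below -/
import Mathlib

section
/- There exists K > 0 such that for all n ≥ 1, every word w in the free group F on {a,s,t} of length at most n lying in the normal closure of R_Γ satisfies Area(w) ≤ Kⁿ · max{ C(i) : 0 ≤ i ≤ 6n }, where C(i) := Area([a, t⁻ⁱ·a·tⁱ]). -/
/-- The three generators of Baumslag's group. -/
inductive Letter : Type
  | a | s | t
  deriving DecidableEq

/-- The free group on `{a, s, t}`. -/
abbrev F : Type := FreeGroup Letter

def a : F := FreeGroup.of Letter.a
def s : F := FreeGroup.of Letter.s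
def t : F := FreeGroup.of Letter.t

/-- The commutator convention `[x, y] = x⁻¹ y⁻¹ x y`. -/
def cmm (x y : F) : F := x⁻¹ * y⁻¹ * x * y

/-- The relator set of Baumslag's presentation
`⟨a,s,t | [a, a^t] = 1, [s,t] = 1, a^s = a·a^t⟩`. -/
def RΓ : Set F :=
  {cmm a (t⁻¹ * a * t), cmm s t, (s⁻¹ * a * s)⁻¹ * a * (t⁻¹ * a * t)}

/-- `w` freely equals a product of `N` conjugates of elements of `R^±1`. -/
def IsConjProd (R : Set F) (N : ℕ) (w : F) : Prop :=
  ∃ (u r : Fin N → F) (ε : Fin N → ℤ),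
    (∀ i, r i ∈ R) ∧ (∀ i, ε i = 1 ∨ ε i = -1) ∧
    w = (List.ofFn fun i => u i * r i ^ ε i * (u i)⁻¹).prod

/-- `Area(w)`: the least `N` such that `w` freely equals a product of `N`
conjugates of relators or their inverses. -/
noncomputable def area (R : Set F) (w : F) : ℕ := sInf {N : ℕ | IsConjProd R N w}

/-- `C(i) = Area([a, t⁻ⁱ·a·tⁱ])`. -/
noncomputable def C (i : ℕ) : ℕ := area RΓ (cmm a ((t ^ i)⁻¹ * a * t ^ i))

namespace P33

def IsRelConj (x : F) : Prop :=
  ∃ (u r : F) (ε : ℤ), r ∈ RΓ ∧ (ε = 1 ∨ ε = -1) ∧ x = u * r ^ ε * u⁻¹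

/-- area at most `c`, list form. -/
def AreaLE (c : ℕ) (w : F) : Prop :=
  ∃ L : List F, L.length ≤ c ∧ (∀ x ∈ L, IsRelConj x) ∧ w = L.prod

lemma isConjProd_of_list {L : List F} (h : ∀ x ∈ L, IsRelConj x) :
    IsConjProd RΓ L.length L.prod := by
  have hf : ∀ i : Fin L.length, ∃ (u r : F) (ε : ℤ), r ∈ RΓ ∧ (ε = 1 ∨ ε = -1) ∧
      L.get i = u * r ^ ε * u⁻¹ := fun i => h _ (L.get_mem i)
  choose u r ε h1 h2 h3 using hf
  refine ⟨u, r, ε, h1, h2, ?_⟩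
  conv_lhs => rw [← List.ofFn_get L]
  exact congrArg List.prod (congrArg List.ofFn (funext fun i => h3 i))

lemma area_le_of_areaLE {c : ℕ} {w : F} (h : AreaLE c w) : area RΓ w ≤ c := by
  obtain ⟨L, hlen, hmem, rfl⟩ := h
  exact le_trans (Nat.sInf_le (isConjProd_of_list hmem)) hlen

lemma AreaLE.mono {c c' : ℕ} {w : F} (h : AreaLE c w) (hc : c ≤ c') : AreaLE c' w := by
  obtain ⟨L, h1, h2, h3⟩ := h
  exact ⟨L, h1.trans hc, h2, h3⟩

lemma AreaLE.one (c : ℕ) : AreaLE c (1 : F) := ⟨[], by simp, by simp, by simp⟩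

lemma AreaLE.of_eq {c : ℕ} {u v : F} (h : AreaLE c u) (huv : u = v) : AreaLE c v := huv ▸ h

lemma AreaLE.mul {c₁ c₂ : ℕ} {u v : F} (h₁ : AreaLE c₁ u) (h₂ : AreaLE c₂ v) :
    AreaLE (c₁ + c₂) (u * v) := by
  obtain ⟨L₁, ha1, ha2, rfl⟩ := h₁
  obtain ⟨L₂, hb1, hb2, rfl⟩ := h₂
  exact ⟨L₁ ++ L₂, by simpa using Nat.add_le_add ha1 hb1,
    by intro x hx; rcases List.mem_append.1 hx with h | h; exacts [ha2 x h, hb2 x h],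
    by rw [List.prod_append]⟩

lemma IsRelConj.conj {x : F} (h : IsRelConj x) (g : F) : IsRelConj (g * x * g⁻¹) := by
  obtain ⟨u, r, ε, h1, h2, rfl⟩ := h
  exact ⟨g * u, r, ε, h1, h2, by group⟩

lemma IsRelConj.inv {x : F} (h : IsRelConj x) : IsRelConj x⁻¹ := by
  obtain ⟨u, r, ε, h1, h2, rfl⟩ := h
  refine ⟨u, r, -ε, h1, by rcases h2 with h | h <;> simp [h], by group⟩

lemma prod_map_conj (g : F) (L : List F) :
    (L.map (fun x => g * x * g⁻¹)).prod = g * L.prod * g⁻¹ := by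
  induction L with
  | nil => simp
  | cons z L ih => simp only [List.map_cons, List.prod_cons, ih]; group

lemma AreaLE.conj {c : ℕ} {w : F} (h : AreaLE c w) (g : F) : AreaLE c (g * w * g⁻¹) := by
  obtain ⟨L, h1, h2, rfl⟩ := h
  refine ⟨L.map (fun x => g * x * g⁻¹), by simpa using h1, ?_, (prod_map_conj g L).symm⟩
  intro x hx
  obtain ⟨y, hy, rfl⟩ := List.mem_map.1 hx
  exact (h2 y hy).conj g

lemma AreaLE.inv {c : ℕ} {w : F} (h : AreaLE c w) : AreaLE c w⁻¹ := by
  obtain ⟨L, h1, h2, rfl⟩ := h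
  refine ⟨(L.map (fun x => x⁻¹)).reverse, by simpa using h1, ?_, List.prod_inv_reverse L⟩
  intro x hx
  obtain ⟨y, hy, rfl⟩ := List.mem_map.1 (List.mem_reverse.1 hx)
  exact (h2 y hy).inv

lemma AreaLE.rel {r : F} (hr : r ∈ RΓ) : AreaLE 1 r := by
  refine ⟨[r], by simp, ?_, by simp⟩
  intro x hx
  simp only [List.mem_singleton] at hx
  subst hx
  exact ⟨1, x, 1, hr, Or.inl rfl, by group⟩

lemma AreaLE.rel_inv {r : F} (hr : r ∈ RΓ) : AreaLE 1 r⁻¹ := (AreaLE.rel hr).inv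

lemma IsRelConj.mem_closure {x : F} (h : IsRelConj x) : x ∈ Subgroup.normalClosure RΓ := by
  obtain ⟨u, r, ε, h1, h2, rfl⟩ := h
  have hr : r ∈ Subgroup.normalClosure RΓ := Subgroup.subset_normalClosure h1
  have : r ^ ε ∈ Subgroup.normalClosure RΓ := zpow_mem hr ε
  exact Subgroup.Normal.conj_mem (Subgroup.normalClosure_normal) _ this u

lemma AreaLE.mem_closure {c : ℕ} {w : F} (h : AreaLE c w) : w ∈ Subgroup.normalClosure RΓ := by
  obtain ⟨L, h1, h2, rfl⟩ := h
  induction L with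
  | nil => simp
  | cons z L ih =>
      rw [List.prod_cons]
      exact Subgroup.mul_mem _ (h2 z (by simp)).mem_closure
        (ih (by simpa using h1.trans (Nat.le_succ c)) (fun x hx => h2 x (by simp [hx])))

lemma exists_areaLE_of_mem_closure {w : F} (h : w ∈ Subgroup.normalClosure RΓ) :
    ∃ c, AreaLE c w := by
  refine Subgroup.closure_induction ?_ ⟨0, AreaLE.one 0⟩ ?_ ?_ h
  · intro x hx
    obtain ⟨r, hr, hconj⟩ := Group.mem_conjugatesOfSet_iff.1 hx
    obtain ⟨g, hg⟩ := isConj_iff.1 hconj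
    refine ⟨1, [x], by simp, ?_, by simp⟩
    intro y hy
    simp only [List.mem_singleton] at hy
    subst hy
    exact ⟨g, r, 1, hr, Or.inl rfl, by rw [← hg]; group⟩
  · rintro x y _ _ ⟨c₁, h₁⟩ ⟨c₂, h₂⟩; exact ⟨c₁ + c₂, h₁.mul h₂⟩
  · rintro x _ ⟨c, hc⟩; exact ⟨c, hc.inv⟩

lemma areaLE_area_self {w : F} (h : w ∈ Subgroup.normalClosure RΓ) : AreaLE (area RΓ w) w := by
  obtain ⟨c, L, h1, h2, h3⟩ := exists_areaLE_of_mem_closure h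
  have hne : {N : ℕ | IsConjProd RΓ N w}.Nonempty :=
    ⟨L.length, by rw [h3]; exact isConjProd_of_list h2⟩
  obtain ⟨u, r, ε, hr, hε, hw⟩ := Nat.sInf_mem hne
  refine ⟨List.ofFn fun i => u i * r i ^ ε i * (u i)⁻¹, by simp [area], ?_, hw⟩
  intro x hx
  obtain ⟨i, rfl⟩ := List.mem_ofFn.1 hx
  exact ⟨u i, r i, ε i, hr i, hε i, rfl⟩

/-! ### Rewriting with cost -/

def Rw (c : ℕ) (u v : F) : Prop := AreaLE c (u⁻¹ * v)

lemma Rw.ofEq {c : ℕ} {u v : F} (h : u = v) : Rw c u v := by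
  subst h; exact (AreaLE.one c).of_eq (by group)

lemma Rw.refl {c : ℕ} (u : F) : Rw c u u := Rw.ofEq rfl

lemma Rw.trans {c₁ c₂ : ℕ} {u v z : F} (h₁ : Rw c₁ u v) (h₂ : Rw c₂ v z) :
    Rw (c₁ + c₂) u z := (h₁.mul h₂).of_eq (by group)

lemma Rw.mono {c c' : ℕ} {u v : F} (h : Rw c u v) (hc : c ≤ c') : Rw c' u v :=
  AreaLE.mono h hc

lemma Rw.symm {c : ℕ} {u v : F} (h : Rw c u v) : Rw c v u :=
  (AreaLE.inv h).of_eq (by group)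

lemma Rw.ofEq2 {c : ℕ} {u v u' v' : F} (h : Rw c u v) (hu : u = u') (hv : v = v') :
    Rw c u' v' := hu ▸ hv ▸ h

lemma Rw.congr {c : ℕ} {u v : F} (h : Rw c u v) (p q : F) : Rw c (p * u * q) (p * v * q) :=
  ((AreaLE.conj h q⁻¹).of_eq (by group) : AreaLE c ((p * u * q)⁻¹ * (p * v * q)))

lemma Rw.mul {c₁ c₂ : ℕ} {u v u' v' : F} (h₁ : Rw c₁ u v) (h₂ : Rw c₂ u' v') :
    Rw (c₁ + c₂) (u * u') (v * v') := by
  have s1 : Rw c₁ (u * u') (v * u') := (h₁.congr 1 u').ofEq2 (by group) (by group)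
  have s2 : Rw c₂ (v * u') (v * v') := (h₂.congr v 1).ofEq2 (by group) (by group)
  exact s1.trans s2

lemma areaLE_of_rw_one {c : ℕ} {w : F} (h : Rw c w 1) : AreaLE c w :=
  (AreaLE.inv h).of_eq (by group)

lemma rw_one_of_areaLE {c : ℕ} {w : F} (h : AreaLE c w) : Rw c w 1 :=
  (AreaLE.inv h).of_eq (by group)

lemma Rw.mem_closure {c : ℕ} {u v : F} (h : Rw c u v) (hu : u ∈ Subgroup.normalClosure RΓ) :
    v ∈ Subgroup.normalClosure RΓ := by
  have h1 : (u⁻¹ * v) ∈ Subgroup.normalClosure RΓ := AreaLE.mem_closure h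
  have h2 := Subgroup.mul_mem _ hu h1
  simpa using h2

lemma areaLE_of_conj {c : ℕ} {w : F} (g : F) (h : AreaLE c (g * w * g⁻¹)) : AreaLE c w :=
  (h.conj g⁻¹).of_eq (by group)

/-! ### Swapping lemmas -/

lemma Rw.swap_inv_right {c : ℕ} {x y : F} (h : Rw c (x * y) (y * x)) :
    Rw c (x * y⁻¹) (y⁻¹ * x) :=
  (h.symm.congr y⁻¹ y⁻¹).ofEq2 (by group) (by group)

lemma Rw.swap_zpow {c : ℕ} {x y : F} (h : Rw c (x * y) (y * x)) (l : ℤ) :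
    Rw (c * l.natAbs) (x * y ^ l) (y ^ l * x) := by
  induction l using Int.induction_on with
  | zero => exact Rw.ofEq (by group)
  | succ k ih =>
      have s1 : Rw (c * (k : ℤ).natAbs) (x * y ^ ((k : ℤ) + 1)) (y ^ (k : ℤ) * x * y) :=
        (ih.congr 1 y).ofEq2 (by group) (by group)
      have s2 : Rw c (y ^ (k : ℤ) * x * y) (y ^ ((k : ℤ) + 1) * x) :=
        (h.congr (y ^ (k : ℤ)) 1).ofEq2 (by group) (by group)
      have main := s1.trans s2
      refine main.mono (le_of_eq ?_)
      have h1 : ((k : ℤ) + 1).natAbs = (k : ℤ).natAbs + 1 := by omega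
      rw [h1, Nat.mul_add, Nat.mul_one]
  | pred k ih =>
      have s1 : Rw (c * (-(k : ℤ)).natAbs) (x * y ^ (-(k : ℤ) - 1)) (y ^ (-(k : ℤ)) * x * y⁻¹) :=
        (ih.congr 1 y⁻¹).ofEq2 (by group) (by group)
      have s2 : Rw c (y ^ (-(k : ℤ)) * x * y⁻¹) (y ^ (-(k : ℤ) - 1) * x) :=
        (h.swap_inv_right.congr (y ^ (-(k : ℤ))) 1).ofEq2 (by group) (by group)
      have main := s1.trans s2
      refine main.mono (le_of_eq ?_)
      have h1 : (-(k : ℤ) - 1).natAbs = (-(k : ℤ)).natAbs + 1 := by omega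
      rw [h1, Nat.mul_add, Nat.mul_one]

lemma rw_ts : Rw 1 (t * s) (s * t) := by
  have h : (t * s)⁻¹ * (s * t) = cmm s t := by rw [cmm]; group
  rw [Rw, h]
  exact AreaLE.rel (by simp [RΓ])

lemma rw_ts_zpow (k l : ℤ) : Rw (k.natAbs * l.natAbs) (t ^ l * s ^ k) (s ^ k * t ^ l) := by
  have h1 : Rw (1 * k.natAbs) (t * s ^ k) (s ^ k * t) := rw_ts.swap_zpow k
  have h2 := (h1.symm).swap_zpow l
  exact h2.symm.mono (le_of_eq (by rw [one_mul]))

/-! ### Representations -/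

@[ext] structure Aff : Type where
  u : (RatFunc ℚ)ˣ
  b : RatFunc ℚ

namespace Aff

noncomputable instance : Mul Aff := ⟨fun p q => ⟨p.u * q.u, p.b * (q.u : RatFunc ℚ) + q.b⟩⟩
noncomputable instance : One Aff := ⟨⟨1, 0⟩⟩
noncomputable instance : Inv Aff :=
  ⟨fun p => ⟨p.u⁻¹, -(p.b * ((p.u⁻¹ : (RatFunc ℚ)ˣ) : RatFunc ℚ))⟩⟩

@[simp] lemma mul_u (p q : Aff) : (p * q).u = p.u * q.u := rfl
@[simp] lemma mul_b (p q : Aff) : (p * q).b = p.b * (q.u : RatFunc ℚ) + q.b := rfl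
@[simp] lemma one_u : (1 : Aff).u = 1 := rfl
@[simp] lemma one_b : (1 : Aff).b = 0 := rfl
@[simp] lemma inv_u (p : Aff) : (p⁻¹).u = p.u⁻¹ := rfl
@[simp] lemma inv_b (p : Aff) : (p⁻¹).b = -(p.b * ((p.u⁻¹ : (RatFunc ℚ)ˣ) : RatFunc ℚ)) := rfl

noncomputable instance : Group Aff where
  mul_assoc p q r := by
    ext
    · simp [mul_assoc]
    · push_cast
      simp only [mul_u, mul_b, Units.val_mul]
      ring
  one_mul p := by ext <;> simp
  mul_one p := by ext <;> simp
  inv_mul_cancel p := by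
    ext
    · simp
    · simp only [mul_u, mul_b, inv_u, inv_b, one_b, Units.val_inv_eq_inv_val]
      field_simp
      ring

end Aff

noncomputable def xK : (RatFunc ℚ)ˣ :=
  Units.mk0 (RatFunc.X) RatFunc.X_ne_zero

lemma X_add_one_ne_zero : (RatFunc.X : RatFunc ℚ) + 1 ≠ 0 := by
  have h : (RatFunc.X : RatFunc ℚ) + 1
      = algebraMap (Polynomial ℚ) (RatFunc ℚ) (Polynomial.X + 1) := by
    simp [RatFunc.algebraMap_X]
  rw [h]
  apply RatFunc.algebraMap_ne_zero
  intro hc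
  have := congrArg (Polynomial.coeff · 0) hc
  simp at this

noncomputable def σK : (RatFunc ℚ)ˣ :=
  Units.mk0 (RatFunc.X + 1) X_add_one_ne_zero

noncomputable def φA : Aff := ⟨1, 1⟩
noncomputable def φS : Aff := ⟨σK, 0⟩
noncomputable def φT : Aff := ⟨xK, 0⟩

noncomputable def φ : F →* Aff :=
  FreeGroup.lift (fun x => match x with
    | Letter.a => φA
    | Letter.s => φS
    | Letter.t => φT)

@[simp] lemma φ_a : φ a = φA := FreeGroup.lift_apply_of
@[simp] lemma φ_s : φ s = φS := FreeGroup.lift_apply_of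
@[simp] lemma φ_t : φ t = φT := FreeGroup.lift_apply_of

@[simp] lemma xK_val : ((xK : (RatFunc ℚ)ˣ) : RatFunc ℚ) = RatFunc.X := rfl
@[simp] lemma σK_val : ((σK : (RatFunc ℚ)ˣ) : RatFunc ℚ) = RatFunc.X + 1 := rfl

lemma φ_relator {r : F} (hr : r ∈ RΓ) : φ r = 1 := by
  simp only [RΓ, Set.mem_insert_iff, Set.mem_singleton_iff] at hr
  have hX : (RatFunc.X : RatFunc ℚ) ≠ 0 := RatFunc.X_ne_zero
  have hX1 : (RatFunc.X : RatFunc ℚ) + 1 ≠ 0 := X_add_one_ne_zero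
  rcases hr with rfl | rfl | rfl <;>
  · simp only [cmm, map_mul, map_inv, φ_a, φ_s, φ_t]
    ext
    · simp [φA, φS, φT]; try group
    · simp only [Aff.mul_u, Aff.mul_b, Aff.inv_u, Aff.inv_b, Units.val_inv_eq_inv_val,
        Units.val_mul, φA, φS, φT, xK_val, σK_val, Aff.one_b, Aff.one_u, Units.val_one]
      field_simp
      try ring

lemma closure_le_ker_φ : Subgroup.normalClosure RΓ ≤ φ.ker :=
  Subgroup.normalClosure_le_normal (fun r hr => φ_relator hr)

/-- abelianization into ℤ × ℤ recording (s,t) exponents -/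
noncomputable def φ₂ : F →* Multiplicative (ℤ × ℤ) :=
  FreeGroup.lift (fun x => match x with
    | Letter.a => 1
    | Letter.s => Multiplicative.ofAdd ((1 : ℤ), (0 : ℤ))
    | Letter.t => Multiplicative.ofAdd ((0 : ℤ), (1 : ℤ)))

@[simp] lemma φ₂_a : φ₂ a = 1 := FreeGroup.lift_apply_of
@[simp] lemma φ₂_s : φ₂ s = Multiplicative.ofAdd ((1 : ℤ), (0 : ℤ)) := FreeGroup.lift_apply_of
@[simp] lemma φ₂_t : φ₂ t = Multiplicative.ofAdd ((0 : ℤ), (1 : ℤ)) := FreeGroup.lift_apply_of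

lemma φ₂_relator {r : F} (hr : r ∈ RΓ) : φ₂ r = 1 := by
  simp only [RΓ, Set.mem_insert_iff, Set.mem_singleton_iff] at hr
  rcases hr with rfl | rfl | rfl <;>
  · simp only [cmm, map_mul, map_inv, φ₂_a, φ₂_s, φ₂_t]
    rw [← ofAdd_zero]
    simp [← ofAdd_neg, ← ofAdd_add, Prod.ext_iff]
    try ring_nf
    try simp

lemma closure_le_ker_φ₂ : Subgroup.normalClosure RΓ ≤ φ₂.ker :=
  Subgroup.normalClosure_le_normal (fun r hr => φ₂_relator hr)

/-! ### The commutators `[a, a^{t^d}]` lie in the normal closure -/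

section DeriveComm

variable {G : Type*} [Group G]

lemma commute_of_cmm_eq_one {x y : G} (h : x⁻¹ * y⁻¹ * x * y = 1) : Commute x y := by
  have h2 : x * y = y * x * (x⁻¹ * y⁻¹ * x * y) := by group
  rw [h, mul_one] at h2
  exact h2

lemma cmm_eq_one_of_commute {x y : G} (h : Commute x y) : x⁻¹ * y⁻¹ * x * y = 1 := by
  have h2 : x⁻¹ * y⁻¹ * x * y = x⁻¹ * y⁻¹ * (x * y) := by group
  rw [h2, h.eq]
  group

/-- `beta τ α j = α^{τ^j}` -/
def beta (τ α : G) (j : ℕ) : G := (τ ^ j)⁻¹ * α * τ ^ j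

lemma beta_zero (τ α : G) : beta τ α 0 = α := by simp [beta]

lemma beta_shift (τ α : G) (i j : ℕ) :
    beta τ α (i + j) = (τ ^ i)⁻¹ * beta τ α j * τ ^ i := by
  simp only [beta, pow_add]
  group

lemma derive_comm (α σ τ : G) (h1 : Commute α (τ⁻¹ * α * τ))
    (h2 : Commute σ τ) (h3 : σ⁻¹ * α * σ = α * (τ⁻¹ * α * τ)) :
    ∀ d, Commute α (beta τ α d) := by
  have hb : ∀ j, σ⁻¹ * beta τ α j * σ = beta τ α j * beta τ α (j + 1) := by
    intro j
    have hστ : σ⁻¹ * (τ ^ j)⁻¹ = (τ ^ j)⁻¹ * σ⁻¹ := (h2.pow_right j).inv_inv.eq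
    have hτσ : τ ^ j * σ = σ * τ ^ j := (h2.pow_right j).symm.eq
    calc σ⁻¹ * beta τ α j * σ
        = (σ⁻¹ * (τ ^ j)⁻¹) * α * (τ ^ j * σ) := by simp only [beta]; group
      _ = ((τ ^ j)⁻¹ * σ⁻¹) * α * (σ * τ ^ j) := by rw [hστ, hτσ]
      _ = (τ ^ j)⁻¹ * (σ⁻¹ * α * σ) * τ ^ j := by group
      _ = (τ ^ j)⁻¹ * (α * (τ⁻¹ * α * τ)) * τ ^ j := by rw [h3]
      _ = beta τ α j * beta τ α (j + 1) := by simp only [beta, pow_succ]; group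
  have hshift : ∀ i j : ℕ, Commute α (beta τ α j) → Commute (beta τ α i) (beta τ α (i + j)) := by
    intro i j h
    have hm := h.map (MulAut.conj ((τ ^ i)⁻¹ : G)).toMonoidHom
    simp only [MulEquiv.coe_toMonoidHom, MulAut.conj_apply, inv_inv] at hm
    rw [beta_shift τ α i j]
    have e1 : beta τ α i = (τ ^ i)⁻¹ * α * τ ^ i := rfl
    rw [e1]
    convert hm using 2 <;> group
  intro d
  induction d using Nat.strong_induction_on with
  | _ d ih =>
    match d with
    | 0 => rw [beta_zero]
    | 1 => simpa [beta, pow_one] using h1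
    | (e + 2) =>
      have IH1 : Commute α (beta τ α (e + 1)) := ih (e + 1) (by omega)
      have IH0 : Commute α (beta τ α e) := ih e (by omega)
      have hXU : Commute α (beta τ α (e + 1)) := IH1
      have hYU : Commute (beta τ α 1) (beta τ α (e + 1)) := by
        have hs := hshift 1 e IH0
        rwa [show 1 + e = e + 1 from by omega] at hs
      have hYV : Commute (beta τ α 1) (beta τ α (e + 2)) := by
        have hs := hshift 1 (e + 1) IH1
        rwa [show 1 + (e + 1) = e + 2 from by omega] at hs
      have hconj : Commute (σ⁻¹ * α * σ) (σ⁻¹ * beta τ α (e + 1) * σ) := by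
        have hm := hXU.map (MulAut.conj (σ⁻¹ : G)).toMonoidHom
        simp only [MulEquiv.coe_toMonoidHom, MulAut.conj_apply, inv_inv] at hm
        convert hm using 2 <;> group
      have hβ1 : beta τ α 1 = τ⁻¹ * α * τ := by simp [beta, pow_one]
      have hXY_UV : Commute (α * beta τ α 1) (beta τ α (e + 1) * beta τ α (e + 2)) := by
        have e1 : σ⁻¹ * α * σ = α * beta τ α 1 := by rw [hβ1]; exact h3
        have e2 : σ⁻¹ * beta τ α (e + 1) * σ = beta τ α (e + 1) * beta τ α (e + 2) := hb (e + 1)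
        rw [← e1, ← e2]
        exact hconj
      -- extract the commutation at distance e+2
      set X := α
      set Y := beta τ α 1
      set U := beta τ α (e + 1)
      set V := beta τ α (e + 2)
      have key : X * (Y * (U * V)) = U * (V * (X * Y)) := by
        have hk := hXY_UV.eq
        calc X * (Y * (U * V)) = (X * Y) * (U * V) := by rw [← mul_assoc]
          _ = (U * V) * (X * Y) := hk
          _ = U * (V * (X * Y)) := by rw [mul_assoc]
      have key2 : X * (U * (V * Y)) = U * (V * (X * Y)) := by
        rw [← key]
        congr 1
        calc U * (V * Y) = U * (Y * V) := by rw [hYV.eq]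
          _ = (U * Y) * V := by rw [mul_assoc]
          _ = (Y * U) * V := by rw [hYU.eq]
          _ = Y * (U * V) := by rw [mul_assoc]
      have key3 : X * U * V = U * V * X := by
        have k : ((X * U) * V) * Y = ((U * V) * X) * Y := by
          calc ((X * U) * V) * Y = X * (U * (V * Y)) := by simp only [mul_assoc]
            _ = U * (V * (X * Y)) := key2
            _ = ((U * V) * X) * Y := by simp only [mul_assoc]
        exact mul_right_cancel k
      have key4 : U * (X * V) = U * (V * X) := by
        calc U * (X * V) = (U * X) * V := by rw [mul_assoc]
          _ = (X * U) * V := by rw [hXU.eq]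
          _ = U * V * X := key3
          _ = U * (V * X) := by rw [mul_assoc]
      exact mul_left_cancel key4

end DeriveComm

/-! ### consequences for the quotient -/

lemma rel_one {r : F} (hr : r ∈ RΓ) :
    (QuotientGroup.mk' (Subgroup.normalClosure RΓ)) r = 1 :=
  (QuotientGroup.eq_one_iff r).2 (Subgroup.subset_normalClosure hr)

lemma comm_mem_closure (d : ℕ) :
    cmm a ((t ^ d)⁻¹ * a * t ^ d) ∈ Subgroup.normalClosure RΓ := by
  set π := QuotientGroup.mk' (Subgroup.normalClosure RΓ) with hπ
  have h1 : Commute (π a) ((π t)⁻¹ * π a * π t) := by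
    apply commute_of_cmm_eq_one
    have := rel_one (show cmm a (t⁻¹ * a * t) ∈ RΓ by simp [RΓ])
    simpa [cmm, map_mul, map_inv, hπ] using this
  have h2 : Commute (π s) (π t) := by
    apply commute_of_cmm_eq_one
    have := rel_one (show cmm s t ∈ RΓ by simp [RΓ])
    simpa [cmm, map_mul, map_inv, hπ] using this
  have h3 : (π s)⁻¹ * π a * π s = π a * ((π t)⁻¹ * π a * π t) := by
    have hrel := rel_one (show (s⁻¹ * a * s)⁻¹ * a * (t⁻¹ * a * t) ∈ RΓ by simp [RΓ])
    simp only [map_mul, map_inv] at hrel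
    calc (π s)⁻¹ * π a * π s
        = ((π s)⁻¹ * π a * π s) * (((π s)⁻¹ * π a * π s)⁻¹ * π a * ((π t)⁻¹ * π a * π t)) := by
          rw [hrel, mul_one]
      _ = π a * ((π t)⁻¹ * π a * π t) := by group
  have hc : Commute (π a) (beta (π t) (π a) d) := derive_comm (π a) (π s) (π t) h1 h2 h3 d
  rw [← QuotientGroup.eq_one_iff (G := F) (N := Subgroup.normalClosure RΓ)]
  have : (π : F →* _) (cmm a ((t ^ d)⁻¹ * a * t ^ d)) = 1 := by
    have expand : (π : F →* _) (cmm a ((t ^ d)⁻¹ * a * t ^ d))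
        = (π a)⁻¹ * (beta (π t) (π a) d)⁻¹ * π a * beta (π t) (π a) d := by
      simp only [cmm, map_mul, map_inv, map_pow, beta]
    rw [expand]
    exact cmm_eq_one_of_commute hc
  exact this

lemma areaLE_C (d : ℕ) : AreaLE (C d) (cmm a ((t ^ d)⁻¹ * a * t ^ d)) :=
  areaLE_area_self (comm_mem_closure d)

lemma C_one_pos : 1 ≤ C 1 := by
  by_contra h
  push_neg at h
  have h0 : C 1 = 0 := by omega
  have := areaLE_C 1
  rw [h0] at this
  obtain ⟨L, hlen, -, hprod⟩ := this
  have : L = [] := List.length_eq_zero_iff.1 (by omega)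
  subst this
  simp only [List.prod_nil] at hprod
  have hne : cmm a ((t ^ 1)⁻¹ * a * t ^ 1) ≠ 1 := by decide
  exact hne hprod

/-! ### x-letters and sorting -/

lemma Rw.swap_inv_left {c : ℕ} {x y : F} (h : Rw c (x * y) (y * x)) :
    Rw c (x⁻¹ * y) (y * x⁻¹) :=
  (h.symm.congr x⁻¹ x⁻¹).ofEq2 (by group) (by group)

def XX (m : ℕ) : F := (t ^ m)⁻¹ * a * t ^ m

def xw (p : ℕ × Bool) : F := if p.2 then XX p.1 else (XX p.1)⁻¹

def toX (L : List (ℕ × Bool)) : F := (L.map xw).prod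

@[simp] lemma toX_nil : toX [] = 1 := rfl

@[simp] lemma toX_cons (p : ℕ × Bool) (L : List (ℕ × Bool)) :
    toX (p :: L) = xw p * toX L := by simp [toX]

@[simp] lemma toX_append (L₁ L₂ : List (ℕ × Bool)) :
    toX (L₁ ++ L₂) = toX L₁ * toX L₂ := by simp [toX]

@[simp] lemma xw_true (m : ℕ) : xw (m, true) = XX m := rfl

@[simp] lemma xw_false (m : ℕ) : xw (m, false) = (XX m)⁻¹ := rfl

lemma xw_mul_xw_not (m : ℕ) (e : Bool) : xw (m, e) * xw (m, !e) = 1 := by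
  cases e <;> simp [xw]

lemma rw_XX_swap {i j : ℕ} (hij : i ≤ j) :
    Rw (C (j - i)) (XX i * XX j) (XX j * XX i) := by
  obtain ⟨d, rfl⟩ : ∃ d, j = i + d := ⟨j - i, by omega⟩
  have hd : i + d - i = d := by omega
  rw [hd]
  have h1 : AreaLE (C d) (cmm a ((t ^ d)⁻¹ * a * t ^ d)) := areaLE_C d
  have h2 := (h1.conj ((t : F) ^ i)⁻¹).inv
  refine h2.of_eq ?_
  simp only [cmm, XX, pow_add]
  group

lemma rw_xw_swap_le {i j : ℕ} (hij : i ≤ j) (e f : Bool) :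
    Rw (C (j - i)) (xw (i, e) * xw (j, f)) (xw (j, f) * xw (i, e)) := by
  have base : Rw (C (j - i)) (XX i * XX j) (XX j * XX i) := rw_XX_swap hij
  cases e <;> cases f
  · rw [xw_false, xw_false]; exact base.swap_inv_left.swap_inv_right
  · rw [xw_false, xw_true]; exact base.swap_inv_left
  · rw [xw_true, xw_false]; exact base.swap_inv_right
  · rw [xw_true, xw_true]; exact base

def dist (i j : ℕ) : ℕ := max i j - min i j

lemma rw_xw_swap (p q : ℕ × Bool) :
    Rw (C (dist p.1 q.1)) (xw p * xw q) (xw q * xw p) := by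
  obtain ⟨i, e⟩ := p
  obtain ⟨j, f⟩ := q
  rcases le_total i j with h | h
  · have hd : dist i j = j - i := by unfold dist; omega
    rw [hd]
    exact rw_xw_swap_le h e f
  · have hd : dist i j = i - j := by unfold dist; omega
    rw [hd]
    exact (rw_xw_swap_le h f e).symm

def expSum (m : ℕ) (L : List (ℕ × Bool)) : ℤ :=
  (L.map fun p => if p.1 = m then (if p.2 then (1 : ℤ) else -1) else 0).sum

@[simp] lemma expSum_nil (m : ℕ) : expSum m ([] : List (ℕ × Bool)) = 0 := rfl

lemma expSum_cons (m : ℕ) (p : ℕ × Bool) (L : List (ℕ × Bool)) :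
    expSum m (p :: L) = (if p.1 = m then (if p.2 then (1 : ℤ) else -1) else 0) + expSum m L := by
  simp [expSum]

lemma expSum_append (m : ℕ) (L₁ L₂ : List (ℕ × Bool)) :
    expSum m (L₁ ++ L₂) = expSum m L₁ + expSum m L₂ := by
  simp [expSum]

lemma mem_of_expSum_neg {m : ℕ} {L : List (ℕ × Bool)} (h : expSum m L < 0) :
    (m, false) ∈ L := by
  induction L with
  | nil => simp [expSum] at h
  | cons p L ih =>
      rw [expSum_cons] at h
      obtain ⟨i, e⟩ := p
      by_cases hm : i = m
      · subst hm
        cases e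
        · exact List.mem_cons_self
        · simp only [if_pos rfl, if_true] at h
          exact List.mem_cons_of_mem _ (ih (by omega))
      · simp only [if_neg hm] at h
        exact List.mem_cons_of_mem _ (ih (by omega))

lemma mem_of_expSum_pos {m : ℕ} {L : List (ℕ × Bool)} (h : 0 < expSum m L) :
    (m, true) ∈ L := by
  induction L with
  | nil => simp [expSum] at h
  | cons p L ih =>
      rw [expSum_cons] at h
      obtain ⟨i, e⟩ := p
      by_cases hm : i = m
      · subst hm
        cases e
        · simp only [if_pos rfl, Bool.false_eq_true, if_false] at h
          exact List.mem_cons_of_mem _ (ih (by omega))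
        · exact List.mem_cons_self
      · simp only [if_neg hm] at h
        exact List.mem_cons_of_mem _ (ih (by omega))

/-- moving a letter to the front by swaps -/
lemma rw_move_front {M B : ℕ}
    (hswap : ∀ p q : ℕ × Bool, p.1 ≤ M → q.1 ≤ M → Rw B (xw p * xw q) (xw q * xw p)) :
    ∀ (A : List (ℕ × Bool)) (q : ℕ × Bool) (Bs : List (ℕ × Bool)),
      (∀ r ∈ A, r.1 ≤ M) → q.1 ≤ M →
      Rw (A.length * B) (toX (A ++ q :: Bs)) (xw q * toX (A ++ Bs)) := by
  intro A
  induction A with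
  | nil => intro q Bs _ _; exact Rw.ofEq (by simp)
  | cons r A ih =>
      intro q Bs hA hq
      have step1 : Rw (A.length * B) (toX (r :: A ++ q :: Bs)) (xw r * (xw q * toX (A ++ Bs))) := by
        have h0 := ih q Bs (fun x hx => hA x (List.mem_cons_of_mem _ hx)) hq
        have h1 := h0.congr (xw r) 1
        refine h1.ofEq2 ?_ ?_ <;> simp [mul_assoc]
      have step2 : Rw B (xw r * (xw q * toX (A ++ Bs))) (xw q * toX (r :: A ++ Bs)) := by
        have h0 := hswap r q (hA r (List.mem_cons_self)) hq
        have h1 := h0.congr 1 (toX (A ++ Bs))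
        refine h1.ofEq2 ?_ ?_ <;> simp [mul_assoc]
      have h3 := step1.trans step2
      refine h3.mono (Nat.le_of_eq ?_)
      simp only [List.length_cons]
      ring

/-- sorting/cancelling lemma -/
lemma rw_sort {M B : ℕ}
    (hswap : ∀ p q : ℕ × Bool, p.1 ≤ M → q.1 ≤ M → Rw B (xw p * xw q) (xw q * xw p)) :
    ∀ (fuel : ℕ) (L : List (ℕ × Bool)), L.length ≤ fuel →
      (∀ p ∈ L, p.1 ≤ M) → (∀ m, expSum m L = 0) →
      Rw (fuel * fuel * B) (toX L) 1 := by
  intro fuel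
  induction fuel with
  | zero =>
      intro L hlen _ _
      have : L = [] := List.length_eq_zero_iff.1 (by omega)
      subst this
      exact Rw.ofEq (by simp)
  | succ n ih =>
      intro L hlen hmem hsum
      rcases L with _ | ⟨p, L'⟩
      · exact Rw.ofEq (by simp)
      ·
          -- find the cancelling partner
          have hmemq : (p.1, !p.2) ∈ L' := by
            have h0 := hsum p.1
            rw [expSum_cons] at h0
            cases hp2 : p.2
            · simp only [hp2, Bool.not_false]
              apply mem_of_expSum_pos
              simp [hp2] at h0
              omega
            · simp only [hp2, Bool.not_true]
              apply mem_of_expSum_neg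
              simp [hp2] at h0
              omega
          obtain ⟨A, Bs, hsplit⟩ := List.append_of_mem hmemq
          subst hsplit
          have hlenA : A.length + Bs.length + 2 ≤ n + 1 := by
            have := hlen
            simp only [List.length_append, List.length_cons] at this
            omega
          have hmemA : ∀ r ∈ A, r.1 ≤ M := fun r hr =>
            hmem r (List.mem_cons_of_mem _ (List.mem_append_left _ hr))
          have hqM : (p.1, !p.2).1 ≤ M := hmem p (List.mem_cons_self)
          -- move the partner to the front of L'
          have step1 : Rw (A.length * B) (toX (p :: (A ++ (p.1, !p.2) :: Bs)))
              (xw p * (xw (p.1, !p.2) * toX (A ++ Bs))) := by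
            have h0 := rw_move_front hswap A (p.1, !p.2) Bs hmemA hqM
            have h1 := h0.congr (xw p) 1
            refine h1.ofEq2 ?_ ?_ <;> simp [mul_assoc]
          -- cancel
          have step2 : xw p * (xw (p.1, !p.2) * toX (A ++ Bs)) = toX (A ++ Bs) := by
            have hc : xw p * xw (p.1, !p.2) = 1 := by
              have := xw_mul_xw_not p.1 p.2
              simpa using this
            rw [← mul_assoc, hc, one_mul]
          -- recurse
          have hsum' : ∀ m, expSum m (A ++ Bs) = 0 := by
            intro m
            have h0 := hsum m
            rw [expSum_cons, expSum_append, expSum_cons] at h0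
            rw [expSum_append]
            by_cases hm : p.1 = m
            · simp only [if_pos hm] at h0
              cases hp2 : p.2 <;> rw [hp2] at h0 <;> simp at h0 <;> omega
            · simp only [if_neg hm] at h0
              omega
          have hmem' : ∀ r ∈ A ++ Bs, r.1 ≤ M := by
            intro r hr
            rcases List.mem_append.1 hr with h | h
            · exact hmemA r h
            · exact hmem r (List.mem_cons_of_mem _
                (List.mem_append_right _ (List.mem_cons_of_mem _ h)))
          have hrec : Rw (n * n * B) (toX (A ++ Bs)) 1 :=
            ih (A ++ Bs) (by simp [List.length_append]; omega) hmem' hsum'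
          have step1' : Rw (A.length * B) (toX (p :: (A ++ (p.1, !p.2) :: Bs)))
              (toX (A ++ Bs)) := step1.ofEq2 rfl step2
          have total := step1'.trans hrec
          refine total.mono ?_
          have hA : A.length ≤ 2 * n + 1 := by omega
          calc A.length * B + n * n * B = (A.length + n * n) * B := by ring
            _ ≤ (2 * n + 1 + n * n) * B := Nat.mul_le_mul_right _ (by omega)
            _ = (n + 1) * (n + 1) * B := by ring

/-! ### expansion -/

lemma Rw.inv {c : ℕ} {u v : F} (h : Rw c u v) : Rw c u⁻¹ v⁻¹ :=
  ((AreaLE.inv h).conj u).of_eq (by group)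

def Yc (k l : ℕ) (e : Bool) : F :=
  if e then (s ^ k * t ^ l)⁻¹ * a * (s ^ k * t ^ l)
  else ((s ^ k * t ^ l)⁻¹ * a * (s ^ k * t ^ l))⁻¹

@[simp] lemma Yc_true (k l : ℕ) : Yc k l true = (s ^ k * t ^ l)⁻¹ * a * (s ^ k * t ^ l) := rfl

@[simp] lemma Yc_false (k l : ℕ) :
    Yc k l false = ((s ^ k * t ^ l)⁻¹ * a * (s ^ k * t ^ l))⁻¹ := rfl

/-- the main relator as a rewriting move -/
lemma rw_rel3 : Rw 1 (s⁻¹ * a * s) (a * (t⁻¹ * a * t)) := by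
  have h : (s⁻¹ * a * s)⁻¹ * (a * (t⁻¹ * a * t)) = (s⁻¹ * a * s)⁻¹ * a * (t⁻¹ * a * t) := by
    group
  rw [Rw, h]
  exact AreaLE.rel (by simp [RΓ])

/-- ℕ-power versions of the `s`-`t` commuting moves -/
lemma rw_t_pow_s (k : ℕ) : Rw k (t * s ^ k) (s ^ k * t) := by
  have h := rw_ts_zpow (k : ℤ) 1
  refine (h.ofEq2 ?_ ?_).mono ?_ <;> simp [zpow_natCast]

lemma rw_sk_inv_tinv (k : ℕ) : Rw k ((s ^ k)⁻¹ * t⁻¹) (t⁻¹ * (s ^ k)⁻¹) :=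
  ((rw_t_pow_s k).swap_inv_left).swap_inv_right.symm

lemma rw_Yc_step_true (k l : ℕ) :
    Rw (2 * k + 1) (Yc (k + 1) l true) (Yc k l true * Yc k (l + 1) true) := by
  have h1 : Rw 1 (Yc (k + 1) l true)
      ((s ^ k * t ^ l)⁻¹ * (a * (t⁻¹ * a * t)) * (s ^ k * t ^ l)) := by
    refine (rw_rel3.congr ((s ^ k * t ^ l)⁻¹ * 1) (s ^ k * t ^ l)).ofEq2 ?_ ?_
    · rw [Yc_true]; group
    · group
  have si : Rw k ((s ^ k * t ^ l)⁻¹ * (t⁻¹ * a * t) * (s ^ k * t ^ l))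
      ((t ^ (l + 1))⁻¹ * (s ^ k)⁻¹ * a * (t * s ^ k) * t ^ l) := by
    refine ((rw_sk_inv_tinv k).congr ((t ^ l)⁻¹) (a * t * s ^ k * t ^ l)).ofEq2 ?_ ?_
    · group
    · group
  have sii : Rw k ((t ^ (l + 1))⁻¹ * (s ^ k)⁻¹ * a * (t * s ^ k) * t ^ l)
      (Yc k (l + 1) true) := by
    refine ((rw_t_pow_s k).congr ((t ^ (l + 1))⁻¹ * (s ^ k)⁻¹ * a) (t ^ l)).ofEq2 ?_ ?_
    · group
    · rw [Yc_true]; group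
  have h2 : Rw (0 + (k + k)) ((s ^ k * t ^ l)⁻¹ * (a * (t⁻¹ * a * t)) * (s ^ k * t ^ l))
      (Yc k l true * Yc k (l + 1) true) := by
    have hfree : (s ^ k * t ^ l)⁻¹ * (a * (t⁻¹ * a * t)) * (s ^ k * t ^ l)
        = Yc k l true * ((s ^ k * t ^ l)⁻¹ * (t⁻¹ * a * t) * (s ^ k * t ^ l)) := by
      rw [Yc_true]; group
    exact ((Rw.refl (Yc k l true)).mul (si.trans sii)).ofEq2 hfree.symm rfl
  have := h1.trans h2
  exact this.mono (by omega)

lemma rw_Yc_step_false (k l : ℕ) :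
    Rw (2 * k + 1) (Yc (k + 1) l false) (Yc k (l + 1) false * Yc k l false) := by
  have h := (rw_Yc_step_true k l).inv
  refine h.ofEq2 ?_ ?_
  · rw [Yc_false, Yc_true]
  · rw [Yc_false, Yc_false, Yc_true, Yc_true]; group

/-- the expansion pattern -/
def Ee : ℕ → ℕ → Bool → List (ℕ × Bool)
  | 0, l, e => [(l, e)]
  | (k + 1), l, true => Ee k l true ++ Ee k (l + 1) true
  | (k + 1), l, false => Ee k (l + 1) false ++ Ee k l false

lemma Ee_length (k l : ℕ) (e : Bool) : (Ee k l e).length = 2 ^ k := by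
  induction k generalizing l e with
  | zero => rfl
  | succ k ih =>
      cases e <;> simp [Ee, List.length_append, ih, pow_succ] <;> ring

lemma Ee_mem (k l : ℕ) (e : Bool) : ∀ p ∈ Ee k l e, l ≤ p.1 ∧ p.1 ≤ l + k := by
  induction k generalizing l e with
  | zero => intro p hp; simp [Ee] at hp; subst hp; simp
  | succ k ih =>
      intro p hp
      cases e <;> simp only [Ee, List.mem_append] at hp <;>
        rcases hp with h | h <;> rcases ih _ _ p h with ⟨h1, h2⟩ <;> omega

lemma two_mul_add_one_le (k : ℕ) : 2 * k + 1 ≤ 2 * 4 ^ k := by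
  have h1 : k < 2 ^ k := Nat.lt_two_pow_self
  have h2 : 2 ^ k ≤ 4 ^ k := Nat.pow_le_pow_left (by norm_num) k
  omega

lemma rw_expand (k : ℕ) : ∀ (l : ℕ) (e : Bool), Rw (4 ^ k) (Yc k l e) (toX (Ee k l e)) := by
  induction k with
  | zero =>
      intro l e
      cases e <;>
      · refine Rw.ofEq ?_
        simp [Ee, Yc, toX, xw, XX]
  | succ k ih =>
      intro l e
      cases e
      · have step := rw_Yc_step_false k l
        have hrec := (ih (l + 1) false).mul (ih l false)
        have h2 := step.trans hrec
        refine (h2.ofEq2 rfl ?_).mono ?_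
        · rw [show Ee (k + 1) l false = Ee k (l + 1) false ++ Ee k l false from rfl, toX_append]
        · have := two_mul_add_one_le k
          have h4 : 4 ^ (k + 1) = 4 ^ k + 4 ^ k + 2 * 4 ^ k := by ring
          omega
      · have step := rw_Yc_step_true k l
        have hrec := (ih l true).mul (ih (l + 1) true)
        have h2 := step.trans hrec
        refine (h2.ofEq2 rfl ?_).mono ?_
        · rw [show Ee (k + 1) l true = Ee k l true ++ Ee k (l + 1) true from rfl, toX_append]
        · have := two_mul_add_one_le k
          have h4 : 4 ^ (k + 1) = 4 ^ k + 4 ^ k + 2 * 4 ^ k := by ring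
          omega

/-! ### collection -/

def st (k l : ℤ) : F := s ^ k * t ^ l

def Yz (k l : ℤ) (e : Bool) : F :=
  if e then (s ^ k * t ^ l)⁻¹ * a * (s ^ k * t ^ l)
  else ((s ^ k * t ^ l)⁻¹ * a * (s ^ k * t ^ l))⁻¹

@[simp] lemma Yz_true (k l : ℤ) : Yz k l true = (s ^ k * t ^ l)⁻¹ * a * (s ^ k * t ^ l) := rfl

@[simp] lemma Yz_false (k l : ℤ) :
    Yz k l false = ((s ^ k * t ^ l)⁻¹ * a * (s ^ k * t ^ l))⁻¹ := rfl

def prodY (E : List (ℤ × ℤ × Bool)) : F := (E.map fun q => Yz q.1 q.2.1 q.2.2).prod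

@[simp] lemma prodY_nil : prodY [] = 1 := rfl

@[simp] lemma prodY_cons (q : ℤ × ℤ × Bool) (E : List (ℤ × ℤ × Bool)) :
    prodY (q :: E) = Yz q.1 q.2.1 q.2.2 * prodY E := by simp [prodY]

def collect : List (Letter × Bool) → List (ℤ × ℤ × Bool) × ℤ × ℤ
  | [] => ([], 0, 0)
  | p :: ℓ =>
    let r := collect ℓ
    match p.1 with
    | Letter.a => ((r.2.1, r.2.2, p.2) :: r.1, r.2.1, r.2.2)
    | Letter.s => (r.1, r.2.1 + (if p.2 then 1 else -1), r.2.2)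
    | Letter.t => (r.1, r.2.1, r.2.2 + (if p.2 then 1 else -1))

lemma collect_bounds : ∀ ℓ : List (Letter × Bool),
    (collect ℓ).2.1.natAbs ≤ ℓ.length ∧ (collect ℓ).2.2.natAbs ≤ ℓ.length ∧
    (collect ℓ).1.length ≤ ℓ.length ∧
    ∀ q ∈ (collect ℓ).1, q.1.natAbs ≤ ℓ.length ∧ q.2.1.natAbs ≤ ℓ.length := by
  intro ℓ
  induction ℓ with
  | nil => simp [collect]
  | cons p ℓ ih =>
      obtain ⟨h1, h2, h3, h4⟩ := ih
      rcases p with ⟨x, b⟩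
      cases x
      · refine ⟨by simpa [collect] using h1.trans (Nat.le_succ _),
          by simpa [collect] using h2.trans (Nat.le_succ _),
          by simp [collect]; omega, ?_⟩
        intro q hq
        simp only [collect, List.mem_cons] at hq
        rcases hq with rfl | hq
        · refine ⟨?_, ?_⟩ <;> simp only [List.length_cons] <;> omega
        · have := h4 q hq
          refine ⟨?_, ?_⟩ <;> simp only [List.length_cons] <;> omega
      · refine ⟨?_, by simpa [collect] using h2.trans (Nat.le_succ _),
          by simpa [collect] using h3.trans (Nat.le_succ _), ?_⟩
        · simp only [collect]
          cases b <;> simp <;> omega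
        · intro q hq
          simp only [collect] at hq
          have := h4 q hq
          simp only [List.length_cons]
          omega
      · refine ⟨by simpa [collect] using h1.trans (Nat.le_succ _), ?_,
          by simpa [collect] using h3.trans (Nat.le_succ _), ?_⟩
        · simp only [collect]
          cases b <;> simp <;> omega
        · intro q hq
          simp only [collect] at hq
          have := h4 q hq
          simp only [List.length_cons]
          omega

lemma mk_cons (p : Letter × Bool) (ℓ : List (Letter × Bool)) :
    FreeGroup.mk (p :: ℓ) = FreeGroup.mk [p] * FreeGroup.mk ℓ := by
  rw [FreeGroup.mul_mk]
  rfl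

lemma mk_single (x : Letter) (b : Bool) :
    FreeGroup.mk [(x, b)] = (FreeGroup.of x) ^ (if b then (1 : ℤ) else -1) := by
  cases b
  · simp only [if_neg (by simp : ¬(false = true))]
    rw [zpow_neg_one]
    rfl
  · simp only [if_pos rfl, zpow_one]
    rfl

lemma rw_step_a (K L : ℤ) (b : Bool) (P : F) :
    Rw 0 (a ^ (if b then (1 : ℤ) else -1) * (st K L * P)) (st K L * (Yz K L b * P)) := by
  cases b <;> refine Rw.ofEq ?_ <;> simp [st, Yz] <;> group

lemma rw_step_s (K L : ℤ) (b : Bool) (P : F) :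
    Rw 0 (s ^ (if b then (1 : ℤ) else -1) * (st K L * P))
      (st (K + (if b then 1 else -1)) L * P) := by
  cases b <;> refine Rw.ofEq ?_ <;> simp [st] <;> group

lemma rw_step_t (K L : ℤ) (b : Bool) (P : F) :
    Rw K.natAbs (t ^ (if b then (1 : ℤ) else -1) * (st K L * P))
      (st K (L + (if b then 1 else -1)) * P) := by
  have hsw := rw_ts_zpow K (if b then (1 : ℤ) else -1)
  have hsw' : Rw K.natAbs (t ^ (if b then (1 : ℤ) else -1) * s ^ K)
      (s ^ K * t ^ (if b then (1 : ℤ) else -1)) := by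
    refine hsw.mono (le_of_eq ?_)
    cases b <;> simp
  have h := hsw'.congr 1 (t ^ L * P)
  refine h.ofEq2 ?_ ?_
  · simp only [st]; group
  · simp only [st]; group

lemma rw_collect : ∀ ℓ : List (Letter × Bool),
    Rw (ℓ.length * ℓ.length) (FreeGroup.mk ℓ)
      (st (collect ℓ).2.1 (collect ℓ).2.2 * prodY (collect ℓ).1) := by
  intro ℓ
  induction ℓ with
  | nil =>
      refine Rw.ofEq ?_
      simp [collect, st, prodY]
      rfl
  | cons p ℓ ih =>
      rcases p with ⟨x, b⟩
      have hK := (collect_bounds ℓ).1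
      have hstep0 : Rw (ℓ.length * ℓ.length) (FreeGroup.mk ((x, b) :: ℓ))
          ((FreeGroup.of x) ^ (if b then (1 : ℤ) else -1)
            * (st (collect ℓ).2.1 (collect ℓ).2.2 * prodY (collect ℓ).1)) := by
        have h1 := ih.congr ((FreeGroup.of x) ^ (if b then (1 : ℤ) else -1)) 1
        refine h1.ofEq2 ?_ ?_
        · rw [mk_cons, mk_single]; group
        · group
      have hmain : Rw (ℓ.length * ℓ.length + ℓ.length)
          (FreeGroup.mk ((x, b) :: ℓ))
          (st (collect ((x, b) :: ℓ)).2.1 (collect ((x, b) :: ℓ)).2.2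
            * prodY (collect ((x, b) :: ℓ)).1) := by
        cases x
        · have h2 := hstep0.trans
            (rw_step_a (collect ℓ).2.1 (collect ℓ).2.2 b (prodY (collect ℓ).1))
          refine (h2.ofEq2 rfl ?_).mono (by omega)
          simp [collect, mul_assoc]
        · have h2 := hstep0.trans
            (rw_step_s (collect ℓ).2.1 (collect ℓ).2.2 b (prodY (collect ℓ).1))
          refine (h2.ofEq2 rfl ?_).mono (by omega)
          simp [collect, mul_assoc]
        · have h2 := hstep0.trans
            (rw_step_t (collect ℓ).2.1 (collect ℓ).2.2 b (prodY (collect ℓ).1))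
          refine (h2.ofEq2 rfl ?_).mono (by omega)
          simp [collect, mul_assoc]
      refine hmain.mono ?_
      simp only [List.length_cons]
      nlinarith

/-! ### homomorphism invariance, shifting, expansion over lists -/

lemma Rw.hom_eq {G : Type*} [Group G] (ψ : F →* G)
    (hker : Subgroup.normalClosure RΓ ≤ ψ.ker) {c : ℕ} {u v : F} (h : Rw c u v) :
    ψ u = ψ v := by
  have hm : (u⁻¹ * v) ∈ ψ.ker := hker (AreaLE.mem_closure h)
  have h1 : ψ (u⁻¹ * v) = 1 := hm
  rw [map_mul, map_inv] at h1
  exact inv_mul_eq_one.mp h1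

lemma φ₂_st (K L : ℤ) : φ₂ (st K L) = Multiplicative.ofAdd (K, L) := by
  simp only [st, map_mul, map_zpow, φ₂_s, φ₂_t, ← ofAdd_zsmul, ← ofAdd_add]
  congr 1
  simp [Prod.ext_iff]

lemma φ₂_Yz (k l : ℤ) (e : Bool) : φ₂ (Yz k l e) = 1 := by
  cases e <;> simp [Yz, map_mul, map_inv] <;> group

lemma φ₂_prodY (E : List (ℤ × ℤ × Bool)) : φ₂ (prodY E) = 1 := by
  induction E with
  | nil => simp [prodY]
  | cons q E ih => rw [prodY_cons, map_mul, ih, φ₂_Yz, one_mul]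

lemma collect_exponents_zero {w : F} (hw : w ∈ Subgroup.normalClosure RΓ) :
    (collect w.toWord).2.1 = 0 ∧ (collect w.toWord).2.2 = 0 := by
  have hRw := rw_collect w.toWord
  rw [FreeGroup.mk_toWord] at hRw
  have h1 : φ₂ w = 1 := closure_le_ker_φ₂ hw
  have h2 := hRw.hom_eq φ₂ closure_le_ker_φ₂
  rw [h1, map_mul, φ₂_prodY, mul_one, φ₂_st] at h2
  have h3 : ((0 : ℤ), (0 : ℤ)) = ((collect w.toWord).2.1, (collect w.toWord).2.2) := by
    have := Multiplicative.ofAdd.injective (a₁ := ((0:ℤ),(0:ℤ)))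
      (a₂ := ((collect w.toWord).2.1, (collect w.toWord).2.2)) (by exact h2)
    exact this
  exact ⟨(Prod.ext_iff.1 h3.symm).1, (Prod.ext_iff.1 h3.symm).2⟩

lemma rw_conj_congr {c : ℕ} {A B : F} (h : Rw c A B) (g : F) :
    Rw (2 * c) (A⁻¹ * g * A) (B⁻¹ * g * B) := by
  have s1 : Rw c (A⁻¹ * g * A) (B⁻¹ * (g * A)) :=
    (h.inv.congr 1 (g * A)).ofEq2 (by group) (by group)
  have s2 : Rw c (B⁻¹ * (g * A)) (B⁻¹ * g * B) :=
    (h.congr (B⁻¹ * g) 1).ofEq2 (by group) (by group)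
  exact (s1.trans s2).mono (by omega)

lemma rw_st_st (k l : ℤ) (n : ℕ) :
    Rw (l.natAbs * n) (st k l * st n n) (st (k + n) (l + n)) := by
  have hsw := rw_ts_zpow (n : ℤ) l
  have h := hsw.congr (s ^ k) (t ^ (n : ℤ))
  refine (h.ofEq2 ?_ ?_).mono (le_of_eq ?_)
  · simp only [st]; group
  · simp only [st]; group
  · simp [mul_comm]

lemma rw_shift_entry (k l : ℤ) (e : Bool) (n : ℕ) :
    Rw (2 * (l.natAbs * n)) ((st n n)⁻¹ * Yz k l e * (st n n))
      (Yz (k + n) (l + n) e) := by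
  have hc := rw_conj_congr (rw_st_st k l n) (if e then a else a⁻¹)
  refine hc.ofEq2 ?_ ?_
  · cases e <;> simp only [Yz, if_true, if_false, st, Bool.false_eq_true] <;> group
  · cases e <;> simp only [Yz, if_true, if_false, st, Bool.false_eq_true] <;> group

lemma rw_shift_list (n bnd : ℕ) : ∀ E : List (ℤ × ℤ × Bool),
    (∀ q ∈ E, q.2.1.natAbs ≤ bnd) →
    Rw (E.length * (2 * (bnd * n))) ((st n n)⁻¹ * prodY E * (st n n))
      (prodY (E.map fun q => (q.1 + n, q.2.1 + n, q.2.2))) := by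
  intro E
  induction E with
  | nil => intro _; refine Rw.ofEq ?_; simp [prodY]
  | cons q E ih =>
      intro hmem
      have hq := hmem q (List.mem_cons_self)
      have hout : Rw (2 * (q.2.1.natAbs * n))
          ((st n n)⁻¹ * Yz q.1 q.2.1 q.2.2 * (st n n)) (Yz (q.1 + n) (q.2.1 + n) q.2.2) :=
        rw_shift_entry q.1 q.2.1 q.2.2 n
      have hmul := (hout.mono (show 2 * (q.2.1.natAbs * n) ≤ 2 * (bnd * n) by
          have := hq; exact Nat.mul_le_mul_left 2 (Nat.mul_le_mul_right n this))).mul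
        (ih (fun r hr => hmem r (List.mem_cons_of_mem _ hr)))
      refine (hmul.ofEq2 ?_ ?_).mono ?_
      · rw [prodY_cons]; group
      · simp only [List.map_cons, prodY_cons]
      · simp only [List.length_cons]
        ring_nf
        omega

/-- entries with ℕ-exponents -/
def prodC (E : List (ℕ × ℕ × Bool)) : F := (E.map fun q => Yc q.1 q.2.1 q.2.2).prod

@[simp] lemma prodC_nil : prodC [] = 1 := rfl

@[simp] lemma prodC_cons (q : ℕ × ℕ × Bool) (E : List (ℕ × ℕ × Bool)) :
    prodC (q :: E) = Yc q.1 q.2.1 q.2.2 * prodC E := by simp [prodC]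

lemma Yz_eq_Yc {k l : ℤ} (hk : 0 ≤ k) (hl : 0 ≤ l) (e : Bool) :
    Yz k l e = Yc k.toNat l.toNat e := by
  have hk' : (s : F) ^ k = s ^ (k.toNat) := by rw [← zpow_natCast, Int.toNat_of_nonneg hk]
  have hl' : (t : F) ^ l = t ^ (l.toNat) := by rw [← zpow_natCast, Int.toNat_of_nonneg hl]
  cases e <;> simp [Yz, Yc, hk', hl']

def toNatEntry (q : ℤ × ℤ × Bool) : ℕ × ℕ × Bool := (q.1.toNat, q.2.1.toNat, q.2.2)

lemma prodY_eq_prodC (E : List (ℤ × ℤ × Bool)) (h : ∀ q ∈ E, 0 ≤ q.1 ∧ 0 ≤ q.2.1) :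
    prodY E = prodC (E.map toNatEntry) := by
  induction E with
  | nil => simp
  | cons q E ih =>
      rw [prodY_cons, List.map_cons, prodC_cons]
      rw [ih (fun r hr => h r (List.mem_cons_of_mem _ hr))]
      congr 1
      obtain ⟨h1, h2⟩ := h q (List.mem_cons_self)
      exact Yz_eq_Yc h1 h2 q.2.2

/-- expansion over a list of entries -/
def bigOf (E : List (ℕ × ℕ × Bool)) : List (ℕ × Bool) :=
  E.flatMap fun q => Ee q.1 q.2.1 q.2.2

lemma rw_expand_list (bnd : ℕ) : ∀ E : List (ℕ × ℕ × Bool),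
    (∀ q ∈ E, q.1 ≤ bnd) →
    Rw (E.length * 4 ^ bnd) (prodC E) (toX (bigOf E)) := by
  intro E
  induction E with
  | nil => intro _; exact Rw.ofEq (by simp [bigOf])
  | cons q E ih =>
      intro hmem
      have h1 : Rw (4 ^ bnd) (Yc q.1 q.2.1 q.2.2) (toX (Ee q.1 q.2.1 q.2.2)) :=
        (rw_expand q.1 q.2.1 q.2.2).mono
          (Nat.pow_le_pow_right (by norm_num) (hmem q (List.mem_cons_self)))
      have hmul := h1.mul (ih (fun r hr => hmem r (List.mem_cons_of_mem _ hr)))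
      refine (hmul.ofEq2 ?_ ?_).mono ?_
      · rw [prodC_cons]
      · rw [show bigOf (q :: E) = Ee q.1 q.2.1 q.2.2 ++ bigOf E from rfl, toX_append]
      · simp only [List.length_cons]
        ring_nf
        omega

lemma bigOf_mem (bnd : ℕ) (E : List (ℕ × ℕ × Bool))
    (h : ∀ q ∈ E, q.1 ≤ bnd ∧ q.2.1 ≤ bnd) :
    ∀ p ∈ bigOf E, p.1 ≤ 2 * bnd := by
  intro p hp
  rw [bigOf, List.mem_flatMap] at hp
  obtain ⟨q, hq, hpq⟩ := hp
  have h1 := Ee_mem q.1 q.2.1 q.2.2 p hpq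
  have h2 := h q hq
  omega

lemma bigOf_length (bnd : ℕ) (E : List (ℕ × ℕ × Bool))
    (h : ∀ q ∈ E, q.1 ≤ bnd) :
    (bigOf E).length ≤ E.length * 2 ^ bnd := by
  induction E with
  | nil => simp [bigOf]
  | cons q E ih =>
      have hlen : (bigOf (q :: E)).length = (Ee q.1 q.2.1 q.2.2).length + (bigOf E).length := by
        rw [show bigOf (q :: E) = Ee q.1 q.2.1 q.2.2 ++ bigOf E from rfl, List.length_append]
      rw [hlen, Ee_length]
      have h1 : 2 ^ q.1 ≤ 2 ^ bnd :=
        Nat.pow_le_pow_right (by norm_num) (h q (List.mem_cons_self))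
      have h2 := ih (fun r hr => h r (List.mem_cons_of_mem _ hr))
      simp only [List.length_cons]
      ring_nf
      omega

/-! ### exponent sums via φ -/

lemma Aff_pow_diag (u : (RatFunc ℚ)ˣ) (m : ℕ) :
    (Aff.mk u 0) ^ m = Aff.mk (u ^ m) 0 := by
  induction m with
  | zero => rfl
  | succ m ih =>
      rw [pow_succ, pow_succ, ih]
      ext <;> simp

lemma φ_XX (m : ℕ) : φ (XX m) = Aff.mk 1 (RatFunc.X ^ m) := by
  rw [XX, map_mul, map_mul, map_inv, map_pow, φ_a, φ_t]
  rw [show φT = Aff.mk xK 0 from rfl, Aff_pow_diag]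
  ext
  · simp [φA]
  · simp [φA, Units.val_inv_eq_inv_val, Units.val_pow_eq_pow_val]

lemma φ_xw (p : ℕ × Bool) :
    φ (xw p) = Aff.mk 1 ((if p.2 then 1 else -1) * RatFunc.X ^ p.1) := by
  rcases p with ⟨m, e⟩
  cases e
  · rw [xw_false, map_inv, φ_XX]
    ext <;> simp
  · rw [xw_true, φ_XX]
    ext <;> simp

noncomputable def polyOf (L : List (ℕ × Bool)) : Polynomial ℚ :=
  (L.map fun p => (if p.2 then (1 : Polynomial ℚ) else -1) * Polynomial.X ^ p.1).sum

@[simp] lemma polyOf_nil : polyOf [] = 0 := rfl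

lemma polyOf_cons (p : ℕ × Bool) (L : List (ℕ × Bool)) :
    polyOf (p :: L) = (if p.2 then (1 : Polynomial ℚ) else -1) * Polynomial.X ^ p.1
      + polyOf L := by simp [polyOf]

lemma φ_toX (L : List (ℕ × Bool)) :
    φ (toX L) = Aff.mk 1 (algebraMap (Polynomial ℚ) (RatFunc ℚ) (polyOf L)) := by
  induction L with
  | nil =>
      rw [toX_nil, map_one, polyOf_nil, map_zero]
      rfl
  | cons p L ih =>
      rw [toX_cons, map_mul, φ_xw, ih, polyOf_cons, map_add, map_mul, map_pow,
        RatFunc.algebraMap_X]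
      ext
      · simp
      · simp only [Aff.mul_b, Units.val_one, mul_one]
        congr 1
        cases hp : p.2 <;> simp

lemma polyOf_coeff (m : ℕ) (L : List (ℕ × Bool)) :
    (polyOf L).coeff m = (expSum m L : ℚ) := by
  induction L with
  | nil => simp
  | cons p L ih =>
      rw [polyOf_cons, Polynomial.coeff_add, ih, expSum_cons]
      push_cast
      congr 1
      rcases p with ⟨k, e⟩
      by_cases hk : k = m
      · cases e <;> simp [hk, Polynomial.coeff_X_pow]
      · have hk' : ¬ m = k := fun h => hk h.symm
        cases e <;> simp [hk, hk', Polynomial.coeff_X_pow]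

lemma expSum_zero_of_mem_closure {L : List (ℕ × Bool)}
    (hm : toX L ∈ Subgroup.normalClosure RΓ) : ∀ m, expSum m L = 0 := by
  intro m
  have h1 : φ (toX L) = 1 := closure_le_ker_φ hm
  rw [φ_toX] at h1
  have h2 : algebraMap (Polynomial ℚ) (RatFunc ℚ) (polyOf L) = 0 := by
    have := congrArg Aff.b h1
    simpa using this
  have h3 : polyOf L = 0 := by
    apply RatFunc.algebraMap_injective ℚ
    rw [h2, map_zero]
  have h4 : (polyOf L).coeff m = (0 : Polynomial ℚ).coeff m := by rw [h3]
  rw [polyOf_coeff] at h4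
  simp only [Polynomial.coeff_zero] at h4
  exact_mod_cast h4

/-! ### assembly -/

lemma pow_helper (n : ℕ) : n ≤ 2 ^ n := (Nat.lt_two_pow_self).le

lemma main_bound (n : ℕ) (hn : 1 ≤ n) (w : F)
    (hlen : (FreeGroup.toWord w).length ≤ n)
    (hw : w ∈ Subgroup.normalClosure RΓ) :
    area RΓ w ≤ 1000 ^ n * (Finset.range (6 * n + 1)).sup (fun i => C i) := by
  set CM := (Finset.range (6 * n + 1)).sup (fun i => C i) with hCMdef
  have hCM1 : 1 ≤ CM :=
    le_trans C_one_pos (Finset.le_sup (f := fun i => C i) (Finset.mem_range.2 (by omega)))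
  -- collection
  obtain ⟨hK0, hL0⟩ := collect_exponents_zero hw
  obtain ⟨-, -, hElen0, hEmem0⟩ := collect_bounds (FreeGroup.toWord w)
  set E := (collect (FreeGroup.toWord w)).1 with hE
  have hElen : E.length ≤ n := hElen0.trans hlen
  have hEmem : ∀ q ∈ E, q.1.natAbs ≤ n ∧ q.2.1.natAbs ≤ n := by
    intro q hq
    obtain ⟨u1, u2⟩ := hEmem0 q hq
    exact ⟨u1.trans hlen, u2.trans hlen⟩
  have h1 : Rw (n * n) w (prodY E) := by
    have h := rw_collect (FreeGroup.toWord w)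
    rw [FreeGroup.mk_toWord] at h
    have heq : st (collect (FreeGroup.toWord w)).2.1 (collect (FreeGroup.toWord w)).2.2
        * prodY (collect (FreeGroup.toWord w)).1 = prodY E := by
      rw [hK0, hL0, ← hE]
      simp [st]
    have h' := h.ofEq2 rfl heq
    exact h'.mono (Nat.mul_le_mul hlen hlen)
  -- shifting
  set E' := E.map (fun q => (q.1 + (n : ℤ), q.2.1 + (n : ℤ), q.2.2)) with hE'
  have h2 : Rw (E.length * (2 * (n * n)))
      ((st n n)⁻¹ * prodY E * (st n n)) (prodY E') :=
    rw_shift_list n n E (fun q hq => (hEmem q hq).2)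
  -- conversion to ℕ entries
  set E'' := E'.map toNatEntry with hE''
  have hE'fact : ∀ q' ∈ E', (0 ≤ q'.1 ∧ 0 ≤ q'.2.1) ∧ (q'.1 ≤ 2 * n ∧ q'.2.1 ≤ 2 * n) := by
    intro q' hq'
    rw [hE', List.mem_map] at hq'
    obtain ⟨q, hq, rfl⟩ := hq'
    obtain ⟨u1, u2⟩ := hEmem q hq
    constructor
    · constructor <;> simp <;> omega
    · constructor <;> simp <;> omega
  have h3 : prodY E' = prodC E'' := prodY_eq_prodC E' (fun q hq => (hE'fact q hq).1)
  have hE''b : ∀ q ∈ E'', q.1 ≤ 2 * n ∧ q.2.1 ≤ 2 * n := by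
    intro q hq
    rw [hE'', List.mem_map] at hq
    obtain ⟨q', hq', rfl⟩ := hq
    obtain ⟨⟨v1, v2⟩, w1, w2⟩ := hE'fact q' hq'
    constructor <;> simp [toNatEntry] <;> omega
  have hE''len : E''.length ≤ n := by
    rw [hE'', hE', List.length_map, List.length_map]
    exact hElen
  -- expansion
  have h4 : Rw (E''.length * 4 ^ (2 * n)) (prodC E'') (toX (bigOf E'')) :=
    rw_expand_list (2 * n) E'' (fun q hq => (hE''b q hq).1)
  set B := bigOf E'' with hB
  have hBmem : ∀ p ∈ B, p.1 ≤ 4 * n := by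
    intro p hp
    have := bigOf_mem (2 * n) E'' hE''b p hp
    omega
  have hBlen : B.length ≤ n * 4 ^ n := by
    have hb := bigOf_length (2 * n) E'' (fun q hq => (hE''b q hq).1)
    have h2n : (2 : ℕ) ^ (2 * n) = 4 ^ n := by
      rw [pow_mul]
      norm_num
    rw [h2n] at hb
    exact hb.trans (Nat.mul_le_mul_right _ hE''len)
  -- the exponent sums vanish
  have hm1 : prodY E ∈ Subgroup.normalClosure RΓ := h1.mem_closure hw
  have hm2 : (st n n)⁻¹ * prodY E * (st n n) ∈ Subgroup.normalClosure RΓ := by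
    have hc := (Subgroup.normalClosure_normal (s := RΓ)).conj_mem _ hm1 (st n n)⁻¹
    simpa [mul_assoc] using hc
  have hm3 : toX B ∈ Subgroup.normalClosure RΓ :=
    ((h2.trans ((Rw.ofEq (c := 0) h3).trans h4))).mem_closure hm2
  have hsum := expSum_zero_of_mem_closure hm3
  -- sorting
  have hswap : ∀ p q : ℕ × Bool, p.1 ≤ 4 * n → q.1 ≤ 4 * n →
      Rw CM (xw p * xw q) (xw q * xw p) := by
    intro p q hp hq
    refine (rw_xw_swap p q).mono ?_
    refine Finset.le_sup (f := fun i => C i) (Finset.mem_range.2 ?_)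
    unfold dist
    omega
  have h5 : Rw ((n * 4 ^ n) * (n * 4 ^ n) * CM) (toX B) 1 :=
    rw_sort hswap (n * 4 ^ n) B hBlen hBmem hsum
  -- combining
  have hRwTot := (h2.trans ((Rw.ofEq (c := 0) h3).trans h4)).trans h5
  have A1 := areaLE_of_rw_one hRwTot
  have A2 : AreaLE (E.length * (2 * (n * n)) + (0 + E''.length * 4 ^ (2 * n))
      + (n * 4 ^ n) * (n * 4 ^ n) * CM) (prodY E) :=
    areaLE_of_conj ((st n n)⁻¹) (A1.of_eq (by group))
  have A3 : AreaLE (E.length * (2 * (n * n)) + (0 + E''.length * 4 ^ (2 * n))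
      + (n * 4 ^ n) * (n * 4 ^ n) * CM + n * n) w :=
    (A2.mul h1.symm).of_eq (by group)
  refine le_trans (area_le_of_areaLE A3) ?_
  -- arithmetic
  have hn2 : n ≤ 2 ^ n := pow_helper n
  have h4n : n * n ≤ 4 ^ n := by
    calc n * n ≤ 2 ^ n * 2 ^ n := Nat.mul_le_mul hn2 hn2
      _ = 4 ^ n := by rw [show (4 : ℕ) = 2 * 2 from rfl, mul_pow]
  have h8n : n * (n * n) ≤ 8 ^ n := by
    calc n * (n * n) ≤ 2 ^ n * (2 ^ n * 2 ^ n) := by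
          exact Nat.mul_le_mul hn2 (Nat.mul_le_mul hn2 hn2)
      _ = 8 ^ n := by rw [show (8 : ℕ) = 2 * (2 * 2) from rfl, mul_pow, mul_pow]
  have h16n : (4 : ℕ) ^ (2 * n) = 16 ^ n := by
    rw [pow_mul]
    norm_num
  have hc2 : E.length * (2 * (n * n)) ≤ 2 * 8 ^ n := by
    calc E.length * (2 * (n * n)) ≤ n * (2 * (n * n)) := Nat.mul_le_mul_right _ hElen
      _ = 2 * (n * (n * n)) := by ring
      _ ≤ 2 * 8 ^ n := Nat.mul_le_mul_left _ h8n
  have hc3 : E''.length * 4 ^ (2 * n) ≤ 32 ^ n := by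
    calc E''.length * 4 ^ (2 * n) ≤ n * 4 ^ (2 * n) := Nat.mul_le_mul_right _ hE''len
      _ = n * 16 ^ n := by rw [h16n]
      _ ≤ 2 ^ n * 16 ^ n := Nat.mul_le_mul_right _ hn2
      _ = 32 ^ n := by rw [show (32 : ℕ) = 2 * 16 from rfl, mul_pow]
  have hc5 : (n * 4 ^ n) * (n * 4 ^ n) ≤ 64 ^ n := by
    calc (n * 4 ^ n) * (n * 4 ^ n) = (n * n) * (4 ^ n * 4 ^ n) := by ring
      _ ≤ 4 ^ n * (4 ^ n * 4 ^ n) := Nat.mul_le_mul_right _ h4n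
      _ = 64 ^ n := by rw [show (64 : ℕ) = 4 * (4 * 4) from rfl, mul_pow, mul_pow]
  have h64 : (2 : ℕ) * 8 ^ n ≤ 64 ^ n := by
    calc (2 : ℕ) * 8 ^ n ≤ 8 ^ n * 8 ^ n := by
          have : (2 : ℕ) ≤ 8 ^ n := le_trans (by norm_num) (Nat.pow_le_pow_right (by norm_num) hn)
          calc (2 : ℕ) * 8 ^ n ≤ 8 ^ n * 8 ^ n := Nat.mul_le_mul_right _ this
            _ = 8 ^ n * 8 ^ n := rfl
      _ ≤ 64 ^ n := by rw [show (64 : ℕ) = 8 * 8 from rfl, mul_pow]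
  have h32 : (32 : ℕ) ^ n ≤ 64 ^ n := Nat.pow_le_pow_left (by norm_num) n
  have h4le : (4 : ℕ) ^ n ≤ 64 ^ n := Nat.pow_le_pow_left (by norm_num) n
  calc E.length * (2 * (n * n)) + (0 + E''.length * 4 ^ (2 * n))
        + (n * 4 ^ n) * (n * 4 ^ n) * CM + n * n
      ≤ 64 ^ n + (0 + 64 ^ n) + 64 ^ n * CM + 64 ^ n := by
        have := Nat.mul_le_mul_right CM hc5
        omega
    _ ≤ 64 ^ n * CM + 64 ^ n * CM + 64 ^ n * CM + 64 ^ n * CM := by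
        have hx : 64 ^ n ≤ 64 ^ n * CM := Nat.le_mul_of_pos_right _ (by omega)
        omega
    _ = (4 * 64 ^ n) * CM := by ring
    _ ≤ (4 ^ n * 64 ^ n) * CM := by
        have : (4 : ℕ) ≤ 4 ^ n := le_trans (by norm_num) (Nat.pow_le_pow_right (by norm_num) hn)
        exact Nat.mul_le_mul_right _ (Nat.mul_le_mul_right _ this)
    _ = 256 ^ n * CM := by rw [show (256 : ℕ) = 4 * 64 from rfl, mul_pow]
    _ ≤ 1000 ^ n * CM := Nat.mul_le_mul_right _ (Nat.pow_le_pow_left (by norm_num) n)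

end P33

/-- Proposition 3.3: there exists `K > 0` such that for all `n ≥ 1`, every word of
length at most `n` representing the identity of Baumslag's group `Γ` has area at most
`Kⁿ · max{ C(i) : 0 ≤ i ≤ 6n }`. -/
theorem area_bound_via_commutator_areas :
    ∃ K : ℕ, 0 < K ∧ ∀ n : ℕ, 1 ≤ n → ∀ w : F,
      (FreeGroup.toWord w).length ≤ n →
      w ∈ Subgroup.normalClosure RΓ →
      area RΓ w ≤ K ^ n * (Finset.range (6 * n + 1)).sup (fun i => C i) := by
  exact ⟨1000, by norm_num, fun n hn w hlen hw => P33.main_bound n hn w hlen hw⟩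
end

section
/- Let m ≥ 2, let f, g ∈ ℤ[x], and let n ≥ max{deg f, deg g}. Then Area(τ_{f,g}) ≤ Area(τ_{f+1,g}) + 2, Area(τ_{f,g}) ≤ Area(τ_{f−1,g}) + 2, Area(τ_{f,g}) ≤ Area(τ_{f,g+xⁿ}) + 2, and Area(τ_{f,g}) ≤ Area(τ_{f,g−xⁿ}) + 2, where all areas are computed with respect to the presentation of Γ_m. -/
/-- The relator set of the torsion analogue `Γ_m`:
`⟨a,s,t | [a, a^t] = 1, [s,t] = 1, a^s = a·a^t, a^m = 1⟩`. -/
def Rm (m : ℕ) : Set F :=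
  {cmm a (t⁻¹ * a * t), cmm s t, (s⁻¹ * a * s)⁻¹ * a * (t⁻¹ * a * t), a ^ m}

/-- `K_m(n) = 10 m² n² + 10`. -/
def Km (m n : ℕ) : ℕ := 10 * m ^ 2 * n ^ 2 + 10

/-- The residue in `{0, …, m−1}` of the `i`-th coefficient of `f` modulo `m`. -/
def cf (m : ℕ) (f : Polynomial ℤ) (i : ℕ) : ℕ := (f.coeff i % (m : ℤ)).toNat

/-- `{{a}}_s^f = a^{c_0}·s⁻¹·a^{c_1}·s⁻¹ ⋯ a^{c_n}·sⁿ`, freely equal to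
`∏_{i=0}^n s^{−i}·a^{c_i}·s^{i}`, where `c_i ∈ {0,…,m−1}` is `f`'s `i`-th coefficient
mod `m`. -/
def wS (m : ℕ) (f : Polynomial ℤ) (n : ℕ) : F :=
  ((List.range (n + 1)).map (fun i => (s ^ i)⁻¹ * a ^ cf m f i * s ^ i)).prod

/-- `{{a}}_t^f = ∏_{i=0}^n t^{−i}·a^{c_i}·t^{i}`. -/
def wT (m : ℕ) (f : Polynomial ℤ) (n : ℕ) : F :=
  ((List.range (n + 1)).map (fun i => (t ^ i)⁻¹ * a ^ cf m f i * t ^ i)).prod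

/-- `^f{{a}}_s = s^{−n}·a^{c_n}·s·a^{c_{n−1}} ⋯ s·a^{c_0}`, the reversed-order
product `∏_{i=n}^{0} s^{−i}·a^{c_i}·s^{i}`. -/
def wS' (m : ℕ) (f : Polynomial ℤ) (n : ℕ) : F :=
  ((List.range (n + 1)).reverse.map (fun i => (s ^ i)⁻¹ * a ^ cf m f i * s ^ i)).prod

/-- `^f{{a}}_t = t^{−n}·a^{c_n}·t·a^{c_{n−1}} ⋯ t·a^{c_0}`. -/
def wT' (m : ℕ) (f : Polynomial ℤ) (n : ℕ) : F :=
  ((List.range (n + 1)).reverse.map (fun i => (t ^ i)⁻¹ * a ^ cf m f i * t ^ i)).prod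

/-- `τ_{f,g} = {{a}}_t^f · {{a}}_t^g · ({{a}}_t^{f+g})⁻¹`, with each word written out
to the degree of the corresponding polynomial. -/
noncomputable def tau (m : ℕ) (f g : Polynomial ℤ) : F :=
  wT m f f.natDegree * wT m g g.natDegree * (wT m (f + g) (f + g).natDegree)⁻¹

namespace SmallChangeAux

open Polynomial

/-! ### Generic lemmas about `IsConjProd` and `area` -/

lemma prod_map_conj (c : F) : ∀ l : List F,
    (l.map (fun x => c * x * c⁻¹)).prod = c * l.prod * c⁻¹
  | [] => by simp
  | x :: l => by
      simp only [List.map_cons, List.prod_cons, prod_map_conj c l]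
      group

lemma isConjProd_conj {R : Set F} {N : ℕ} {w : F} (c : F) (h : IsConjProd R N w) :
    IsConjProd R N (c * w * c⁻¹) := by
  obtain ⟨u, r, ε, hr, hε, hw⟩ := h
  refine ⟨fun i => c * u i, r, ε, hr, hε, ?_⟩
  have key : (List.ofFn fun i => c * u i * r i ^ ε i * (c * u i)⁻¹)
      = (List.ofFn fun i => u i * r i ^ ε i * (u i)⁻¹).map (fun x => c * x * c⁻¹) := by
    rw [List.map_ofFn]
    congr 1
    funext i
    simp only [Function.comp]
    group
  rw [key, prod_map_conj, ← hw]

lemma isConjProd_append {R : Set F} {N : ℕ} {w : F} (h : IsConjProd R N w)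
    {r : F} (hr : r ∈ R) {ε : ℤ} (hε : ε = 1 ∨ ε = -1) (u : F) :
    IsConjProd R (N + 1) (w * (u * r ^ ε * u⁻¹)) := by
  obtain ⟨u0, r0, ε0, hr0, hε0, hw⟩ := h
  refine ⟨Fin.snoc u0 u, Fin.snoc r0 r, Fin.snoc ε0 ε, ?_, ?_, ?_⟩
  · intro i
    refine Fin.lastCases ?_ ?_ i
    · simpa using hr
    · intro j; simpa using hr0 j
  · intro i
    refine Fin.lastCases ?_ ?_ i
    · simpa using hε
    · intro j; simpa using hε0 j
  · rw [List.ofFn_succ', List.concat_eq_append, List.prod_append]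
    simp only [Fin.snoc_castSucc, Fin.snoc_last, List.prod_cons, List.prod_nil, mul_one]
    rw [← hw]

/-- `w` is, up to conjugation, `w'` times a single conjugate of a relator power
with exponent in `{1, -1, 0}`. -/
def Step (R : Set F) (w w' : F) : Prop :=
  ∃ (c u r : F) (ε : ℤ), r ∈ R ∧ (ε = 1 ∨ ε = -1 ∨ ε = 0) ∧
    w = c * w' * c⁻¹ * (u * r ^ ε * u⁻¹)

lemma Step.symm {R : Set F} {w w' : F} (h : Step R w w') : Step R w' w := by
  obtain ⟨c, u, r, ε, hr, hε, hw⟩ := h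
  refine ⟨c⁻¹, c⁻¹ * u, r, -ε, hr, by rcases hε with rfl | rfl | rfl <;> omega, ?_⟩
  rw [hw]
  group

lemma Step.forward {R : Set F} {w w' : F} (h : Step R w w') (N : ℕ)
    (hN : IsConjProd R N w') : ∃ M, M ≤ N + 1 ∧ IsConjProd R M w := by
  obtain ⟨c, u, r, ε, hr, hε, hw⟩ := h
  rcases hε with hε | hε | hε
  · refine ⟨N + 1, le_rfl, ?_⟩
    rw [hw]
    exact isConjProd_append (isConjProd_conj c hN) hr (Or.inl hε) u
  · refine ⟨N + 1, le_rfl, ?_⟩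
    rw [hw]
    exact isConjProd_append (isConjProd_conj c hN) hr (Or.inr hε) u
  · refine ⟨N, by omega, ?_⟩
    have hw' : w = c * w' * c⁻¹ := by rw [hw, hε]; group
    rw [hw']
    exact isConjProd_conj c hN

lemma Step.area_le {R : Set F} {w w' : F} (h : Step R w w') :
    area R w ≤ area R w' + 1 := by
  unfold area
  by_cases hne : {N : ℕ | IsConjProd R N w'}.Nonempty
  · obtain ⟨M, hM, hMw⟩ := h.forward _ (Nat.sInf_mem hne)
    exact (Nat.sInf_le hMw).trans hM
  · have hemp : {N : ℕ | IsConjProd R N w} = ∅ := by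
      apply Set.not_nonempty_iff_eq_empty.mp
      rintro ⟨N, hN⟩
      obtain ⟨M, _, hM⟩ := h.symm.forward N hN
      exact hne ⟨M, hM⟩
    rw [hemp, Nat.sInf_empty]
    exact Nat.zero_le _

/-! ### Lemmas about the words `wT` -/

lemma pow_eq_sub_mul (x : F) (c₁ c₂ : ℕ) :
    x ^ c₁ = x ^ ((c₁ : ℤ) - (c₂ : ℤ)) * x ^ c₂ := by
  rw [← zpow_natCast x c₁, ← zpow_natCast x c₂, ← zpow_add]
  congr 1
  ring

lemma pow_eq_mul_sub (x : F) (c₁ c₂ : ℕ) :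
    x ^ c₁ = x ^ c₂ * x ^ ((c₁ : ℤ) - (c₂ : ℤ)) := by
  rw [← zpow_natCast x c₁, ← zpow_natCast x c₂, ← zpow_add]
  congr 1
  ring

lemma cf_eq_zero_of_gt (m : ℕ) (f : Polynomial ℤ) {i : ℕ} (h : f.natDegree < i) :
    cf m f i = 0 := by
  unfold cf
  rw [Polynomial.coeff_eq_zero_of_natDegree_lt h]
  simp

lemma wT_succ (m : ℕ) (f : Polynomial ℤ) (k : ℕ) :
    wT m f (k + 1) = wT m f k * ((t ^ (k + 1))⁻¹ * a ^ cf m f (k + 1) * t ^ (k + 1)) := by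
  unfold wT
  rw [List.range_succ, List.map_append, List.prod_append]
  simp

lemma wT_stable (m : ℕ) (f : Polynomial ℤ) {n : ℕ} (h : f.natDegree ≤ n) :
    wT m f n = wT m f f.natDegree := by
  induction n, h using Nat.le_induction with
  | base => rfl
  | succ k hk ih =>
      rw [wT_succ, cf_eq_zero_of_gt m f (by omega), ih]
      simp

lemma tau_eq (m : ℕ) (f g : Polynomial ℤ) {n : ℕ} (hf : f.natDegree ≤ n)
    (hg : g.natDegree ≤ n) :
    tau m f g = wT m f n * wT m g n * (wT m (f + g) n)⁻¹ := by
  unfold tau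
  rw [wT_stable m f hf, wT_stable m g hg,
    wT_stable m (f + g) ((Polynomial.natDegree_add_le f g).trans (max_le hf hg))]

lemma wT_bottom (m : ℕ) (f₁ f₂ : Polynomial ℤ) (n : ℕ)
    (h : ∀ i, 0 < i → cf m f₁ i = cf m f₂ i) :
    wT m f₁ n = a ^ ((cf m f₁ 0 : ℤ) - (cf m f₂ 0 : ℤ)) * wT m f₂ n := by
  unfold wT
  rw [List.range_succ_eq_map]
  simp only [List.map_cons, List.prod_cons, List.map_map]
  have htail : (List.range n).map ((fun i => (t ^ i)⁻¹ * a ^ cf m f₁ i * t ^ i) ∘ Nat.succ)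
      = (List.range n).map ((fun i => (t ^ i)⁻¹ * a ^ cf m f₂ i * t ^ i) ∘ Nat.succ) := by
    apply List.map_congr_left
    intro i _
    simp only [Function.comp]
    rw [h (i + 1) (Nat.succ_pos i)]
  rw [htail]
  simp only [pow_zero, inv_one, one_mul, mul_one]
  rw [pow_eq_sub_mul a (cf m f₁ 0) (cf m f₂ 0), mul_assoc]

lemma wT_top (m : ℕ) (g₁ g₂ : Polynomial ℤ) (n : ℕ)
    (h : ∀ i, i < n → cf m g₁ i = cf m g₂ i) :
    wT m g₁ n = wT m g₂ n * ((t ^ n)⁻¹ * a ^ ((cf m g₁ n : ℤ) - (cf m g₂ n : ℤ)) * t ^ n) := by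
  unfold wT
  rw [List.range_succ]
  simp only [List.map_append, List.map_cons, List.map_nil, List.prod_append,
    List.prod_cons, List.prod_nil, mul_one]
  have hpre : (List.range n).map (fun i => (t ^ i)⁻¹ * a ^ cf m g₁ i * t ^ i)
      = (List.range n).map (fun i => (t ^ i)⁻¹ * a ^ cf m g₂ i * t ^ i) := by
    apply List.map_congr_left
    intro i hi
    rw [h i (List.mem_range.mp hi)]
  rw [hpre]
  rw [pow_eq_mul_sub a (cf m g₁ n) (cf m g₂ n)]
  group

/-! ### Arithmetic of coefficients mod `m` -/

lemma step_mod (m : ℕ) (hm : 2 ≤ m) (x : ℤ) :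
    ∃ e : ℤ, (e = 0 ∨ e = 1) ∧
      (((x + 1) % (m : ℤ)).toNat : ℤ) = ((x % (m : ℤ)).toNat : ℤ) + 1 - (m : ℤ) * e := by
  have hm2 : (2 : ℤ) ≤ (m : ℤ) := by exact_mod_cast hm
  have h0 : 0 ≤ x % (m : ℤ) := Int.emod_nonneg x (by omega)
  have h1 : x % (m : ℤ) < (m : ℤ) := Int.emod_lt_of_pos x (by omega)
  have hadd : (x + 1) % (m : ℤ) = (x % (m : ℤ) + 1) % (m : ℤ) := by
    conv_lhs => rw [Int.add_emod]
    rw [Int.emod_eq_of_lt (by omega) (by omega : (1 : ℤ) < (m : ℤ))]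
  by_cases hc : x % (m : ℤ) + 1 < (m : ℤ)
  · refine ⟨0, Or.inl rfl, ?_⟩
    rw [hadd, Int.emod_eq_of_lt (by omega) hc, Int.toNat_of_nonneg (by omega),
      Int.toNat_of_nonneg h0]
    ring
  · refine ⟨1, Or.inr rfl, ?_⟩
    have hr : x % (m : ℤ) + 1 = (m : ℤ) := by omega
    rw [hadd, hr, Int.emod_self, Int.toNat_of_nonneg h0]
    simp
    omega

/-! ### The two step identities -/

lemma step_add_one (m : ℕ) (hm : 2 ≤ m) (f g : Polynomial ℤ) (n : ℕ)
    (hf : f.natDegree ≤ n) (hg : g.natDegree ≤ n) :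
    Step (Rm m) (tau m (f + 1) g) (tau m f g) := by
  have hf1 : (f + 1).natDegree ≤ n :=
    (Polynomial.natDegree_add_le f 1).trans (by simp [hf])
  obtain ⟨e₁, he₁, h1⟩ := step_mod m hm (f.coeff 0)
  obtain ⟨e₂, he₂, h2⟩ := step_mod m hm ((f + g).coeff 0)
  have hc1 : ∀ i, 0 < i → cf m (f + 1) i = cf m f i := by
    intro i hi
    have hco : (f + 1).coeff i = f.coeff i := by
      simp [Polynomial.coeff_add, Polynomial.coeff_one, hi.ne']
    unfold cf
    rw [hco]
  have hc2 : ∀ i, 0 < i → cf m (f + g + 1) i = cf m (f + g) i := by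
    intro i hi
    have hco : (f + g + 1).coeff i = (f + g).coeff i := by
      simp [Polynomial.coeff_add, Polynomial.coeff_one, hi.ne']
    unfold cf
    rw [hco]
  have hv1 : (cf m (f + 1) 0 : ℤ) - (cf m f 0 : ℤ) = 1 - (m : ℤ) * e₁ := by
    have hco : (f + 1).coeff 0 = f.coeff 0 + 1 := by
      simp [Polynomial.coeff_add, Polynomial.coeff_one]
    unfold cf
    rw [hco, h1]
    ring
  have hv2 : (cf m (f + g + 1) 0 : ℤ) - (cf m (f + g) 0 : ℤ) = 1 - (m : ℤ) * e₂ := by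
    have hco : (f + g + 1).coeff 0 = (f + g).coeff 0 + 1 := by
      simp [Polynomial.coeff_add, Polynomial.coeff_one]
    unfold cf
    rw [hco, h2]
    ring
  refine ⟨a ^ ((1 : ℤ) - (m : ℤ) * e₁), 1, a ^ m, e₂ - e₁, by simp [Rm], ?_, ?_⟩
  · rcases he₁ with rfl | rfl <;> rcases he₂ with rfl | rfl <;> omega
  · rw [tau_eq m (f + 1) g hf1 hg, tau_eq m f g hf hg,
      wT_bottom m (f + 1) f n hc1, hv1]
    have hpoly : f + 1 + g = f + g + 1 := by ring
    rw [hpoly, wT_bottom m (f + g + 1) (f + g) n hc2, hv2]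
    rw [← zpow_natCast a m, ← zpow_mul]
    group

lemma step_add_pow (m : ℕ) (hm : 2 ≤ m) (f g : Polynomial ℤ) (n : ℕ)
    (hf : f.natDegree ≤ n) (hg : g.natDegree ≤ n) :
    Step (Rm m) (tau m f (g + X ^ n)) (tau m f g) := by
  have hgX : (g + X ^ n).natDegree ≤ n :=
    (Polynomial.natDegree_add_le g (X ^ n)).trans
      (by simp [hg, Polynomial.natDegree_X_pow])
  obtain ⟨e₂, he₂, h2⟩ := step_mod m hm (g.coeff n)
  obtain ⟨e₃, he₃, h3⟩ := step_mod m hm ((f + g).coeff n)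
  have hcg : ∀ i, i < n → cf m (g + X ^ n) i = cf m g i := by
    intro i hi
    have hco : (g + X ^ n).coeff i = g.coeff i := by
      simp [Polynomial.coeff_add, Polynomial.coeff_X_pow, hi.ne]
    unfold cf
    rw [hco]
  have hcf : ∀ i, i < n → cf m (f + g + X ^ n) i = cf m (f + g) i := by
    intro i hi
    have hco : (f + g + X ^ n).coeff i = (f + g).coeff i := by
      simp [Polynomial.coeff_add, Polynomial.coeff_X_pow, hi.ne]
    unfold cf
    rw [hco]
  have hvg : (cf m (g + X ^ n) n : ℤ) - (cf m g n : ℤ) = 1 - (m : ℤ) * e₂ := by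
    have hco : (g + X ^ n).coeff n = g.coeff n + 1 := by
      simp [Polynomial.coeff_add, Polynomial.coeff_X_pow]
    unfold cf
    rw [hco, h2]
    ring
  have hvf : (cf m (f + g + X ^ n) n : ℤ) - (cf m (f + g) n : ℤ) = 1 - (m : ℤ) * e₃ := by
    have hco : (f + g + X ^ n).coeff n = (f + g).coeff n + 1 := by
      simp [Polynomial.coeff_add, Polynomial.coeff_X_pow]
    unfold cf
    rw [hco, h3]
    ring
  refine ⟨1, wT m (f + g) n * (t ^ n)⁻¹, a ^ m, e₃ - e₂, by simp [Rm], ?_, ?_⟩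
  · rcases he₂ with rfl | rfl <;> rcases he₃ with rfl | rfl <;> omega
  · rw [tau_eq m f (g + X ^ n) hf hgX, tau_eq m f g hf hg,
      wT_top m (g + X ^ n) g n hcg, hvg]
    have hpoly : f + (g + X ^ n) = f + g + X ^ n := by ring
    rw [hpoly, wT_top m (f + g + X ^ n) (f + g) n hcf, hvf]
    rw [← zpow_natCast a m, ← zpow_mul]
    group

end SmallChangeAux


open Polynomial in
/-- Lemma 4.2: for `m ≥ 2`, `f, g ∈ ℤ[x]` and `n ≥ max{deg f, deg g}`, changing `f` by
`±1` or `g` by `±xⁿ` changes the area of `τ_{f,g}` (with respect to the presentation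
of `Γ_m`) by at most `2`. -/
theorem small_change_lemma (m : ℕ) (hm : 2 ≤ m) (f g : Polynomial ℤ) (n : ℕ)
    (hn : max f.natDegree g.natDegree ≤ n) :
    area (Rm m) (tau m f g) ≤ area (Rm m) (tau m (f + 1) g) + 2 ∧
    area (Rm m) (tau m f g) ≤ area (Rm m) (tau m (f - 1) g) + 2 ∧
    area (Rm m) (tau m f g) ≤ area (Rm m) (tau m f (g + X ^ n)) + 2 ∧
    area (Rm m) (tau m f g) ≤ area (Rm m) (tau m f (g - X ^ n)) + 2 := by
  have hf : f.natDegree ≤ n := le_trans (le_max_left _ _) hn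
  have hg : g.natDegree ≤ n := le_trans (le_max_right _ _) hn
  refine ⟨?_, ?_, ?_, ?_⟩
  · have h := (SmallChangeAux.step_add_one m hm f g n hf hg).symm.area_le
    omega
  · have hf' : (f - 1).natDegree ≤ n :=
      (Polynomial.natDegree_sub_le f 1).trans (by simp [hf])
    have h := (SmallChangeAux.step_add_one m hm (f - 1) g n hf' hg).area_le
    have hpoly : f - 1 + 1 = f := by ring
    rw [hpoly] at h
    omega
  · have h := (SmallChangeAux.step_add_pow m hm f g n hf hg).symm.area_le
    omega
  · have hg' : (g - X ^ n).natDegree ≤ n :=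
      (Polynomial.natDegree_sub_le g (X ^ n)).trans
        (by simp [hg, Polynomial.natDegree_X_pow])
    have h := (SmallChangeAux.step_add_pow m hm f (g - X ^ n) n hf hg').area_le
    have hpoly : g - X ^ n + X ^ n = g := by ring
    rw [hpoly] at h
    omega
end

section
/- Let m ≥ 2, let f, g ∈ ℤ[x], and set n := 1 + max{deg f, deg g}. Then Area(τ_{(x+1)f, (x+1)g}) ≤ Area(τ_{f,g}) + 6·K_m(n), where K_m(n) := 10m²n² + 10 and areas are computed with respect to the presentation of Γ_m. -/
/-- auxiliary: `w` is a product of at most `k` conjugates of relators. -/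
def Bnd (R : Set F) (k : ℕ) (w : F) : Prop :=
  ∃ L : List F,
    L.length ≤ k ∧
    (∀ x ∈ L, ∃ (u r : F) (ε : ℤ), r ∈ R ∧ (ε = 1 ∨ ε = -1) ∧ x = u * r ^ ε * u⁻¹) ∧
    w = L.prod

theorem bnd_of_isConjProd {R N w} (h : IsConjProd R N w) : Bnd R N w := by
  obtain ⟨u, r, ε, h1, h2, h3⟩ := h
  exact ⟨List.ofFn fun i => u i * r i ^ ε i * (u i)⁻¹, by simp,
    fun x hx => by
      rw [List.mem_ofFn] at hx
      obtain ⟨i, hi⟩ := hx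
      exact ⟨u i, r i, ε i, h1 i, h2 i, hi.symm⟩, h3⟩

theorem isConjProd_of_bnd {R k w} (h : Bnd R k w) : ∃ N ≤ k, IsConjProd R N w := by
  obtain ⟨L, hlen, hmem, hprod⟩ := h
  refine ⟨L.length, hlen, ?_⟩
  choose u r ε h1 h2 h3 using fun i : Fin L.length => hmem (L.get i) (by exact L.get_mem i)
  refine ⟨u, r, ε, h1, h2, ?_⟩
  have : (List.ofFn fun i => u i * r i ^ ε i * (u i)⁻¹) = List.ofFn L.get := by
    congr 1; funext i; exact (h3 i).symm
  rw [this, List.ofFn_get, hprod]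

theorem bnd_one {R : Set F} : Bnd R 0 (1 : F) := ⟨[], by simp, by simp, by simp⟩

theorem bnd_mono {R k k' w} (hk : k ≤ k') (h : Bnd R k w) : Bnd R k' w := by
  obtain ⟨L, h1, h2, h3⟩ := h; exact ⟨L, h1.trans hk, h2, h3⟩

theorem bnd_mul {R k1 k2 w1 w2} (h1 : Bnd R k1 w1) (h2 : Bnd R k2 w2) :
    Bnd R (k1 + k2) (w1 * w2) := by
  obtain ⟨L1, a1, b1, c1⟩ := h1
  obtain ⟨L2, a2, b2, c2⟩ := h2
  refine ⟨L1 ++ L2, by simpa using Nat.add_le_add a1 a2, ?_, by simp [c1, c2]⟩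
  intro x hx
  rcases List.mem_append.1 hx with h | h
  exacts [b1 x h, b2 x h]

theorem conj_prod (x : F) : ∀ L : List F, x * L.prod * x⁻¹ = (L.map (fun y => x * y * x⁻¹)).prod
  | [] => by simp
  | y :: L => by
    simp only [List.map_cons, List.prod_cons, ← conj_prod x L]
    group

theorem bnd_conj {R k w} (x : F) (h : Bnd R k w) : Bnd R k (x * w * x⁻¹) := by
  obtain ⟨L, a1, b1, c1⟩ := h
  refine ⟨L.map (fun y => x * y * x⁻¹), by simpa using a1, ?_, ?_⟩
  · intro y hy
    rw [List.mem_map] at hy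
    obtain ⟨z, hz, rfl⟩ := hy
    obtain ⟨u, r, ε, hr, hε, rfl⟩ := b1 z hz
    exact ⟨x * u, r, ε, hr, hε, by group⟩
  · rw [c1, ← conj_prod]

theorem bnd_inv {R k w} (h : Bnd R k w) : Bnd R k w⁻¹ := by
  obtain ⟨L, a1, b1, c1⟩ := h
  refine ⟨(L.map (fun y => y⁻¹)).reverse, by simpa using a1, ?_, ?_⟩
  · intro y hy
    simp only [List.mem_reverse, List.mem_map] at hy
    obtain ⟨z, hz, rfl⟩ := hy
    obtain ⟨u, r, ε, hr, hε, rfl⟩ := b1 z hz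
    refine ⟨u, r, -ε, hr, by omega, by group⟩
  · rw [c1, List.prod_inv_reverse]

/-- `w ≈ v` with cost `k`. -/
def Req (R : Set F) (k : ℕ) (w v : F) : Prop := Bnd R k (w * v⁻¹)

theorem req_refl {R} (w : F) : Req R 0 w w := by
  unfold Req; rw [mul_inv_cancel]; exact bnd_one

theorem req_of_eq {R} {w v : F} (h : w = v) : Req R 0 w v := h ▸ req_refl w

theorem req_symm {R k} {w v : F} (h : Req R k w v) : Req R k v w := by
  have := bnd_inv h
  simpa [Req, mul_inv_rev] using this

theorem req_trans {R k1 k2} {w v u : F} (h1 : Req R k1 w v) (h2 : Req R k2 v u) :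
    Req R (k1 + k2) w u := by
  have := bnd_mul h1 h2
  unfold Req at *
  have e : w * v⁻¹ * (v * u⁻¹) = w * u⁻¹ := by group
  rwa [e] at this

theorem req_mono {R k k'} {w v : F} (hk : k ≤ k') (h : Req R k w v) : Req R k' w v :=
  bnd_mono hk h

theorem req_mul_right {R k} {w v : F} (x : F) (h : Req R k w v) : Req R k (w * x) (v * x) := by
  unfold Req at *
  have e : w * x * (v * x)⁻¹ = w * v⁻¹ := by group
  rwa [e]

theorem req_mul_left {R k} {w v : F} (x : F) (h : Req R k w v) : Req R k (x * w) (x * v) := by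
  unfold Req at *
  have e : x * w * (x * v)⁻¹ = x * (w * v⁻¹) * x⁻¹ := by group
  rw [e]; exact bnd_conj x h

theorem req_inv {R k} {w v : F} (h : Req R k w v) : Req R k w⁻¹ v⁻¹ := by
  unfold Req at *
  have e : w⁻¹ * (v⁻¹)⁻¹ = w⁻¹ * (w * v⁻¹)⁻¹ * w := by group
  rw [e]
  have := bnd_conj w⁻¹ (bnd_inv h)
  have e2 : w⁻¹ * (w * v⁻¹)⁻¹ * w = w⁻¹ * (w * v⁻¹)⁻¹ * (w⁻¹)⁻¹ := by group
  rwa [← e2] at this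

theorem req_mul {R k1 k2} {w v w' v' : F} (h1 : Req R k1 w v) (h2 : Req R k2 w' v') :
    Req R (k1 + k2) (w * w') (v * v') :=
  req_trans (req_mul_right w' h1) (req_mul_left v h2)

theorem req_of_rel {m : ℕ} {r : F} (h : r ∈ Rm m) : Req (Rm m) 1 r 1 := by
  unfold Req
  rw [inv_one, mul_one]
  exact ⟨[r], by simp, fun x hx => by
    rw [List.mem_singleton] at hx
    exact ⟨1, r, 1, h, Or.inl rfl, by simp [hx]⟩, by simp⟩

theorem req_conj {R k} {w v : F} (x : F) (h : Req R k w v) :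
    Req R k (x⁻¹ * w * x) (x⁻¹ * v * x) :=
  req_mul_right x (req_mul_left x⁻¹ h)

theorem req_congr {R k} {w w' v v' : F} (hw : w = w') (hv : v = v') (h : Req R k w v) :
    Req R k w' v' := hw ▸ hv ▸ h

theorem mem_cmm_a {m : ℕ} : cmm a (t⁻¹ * a * t) ∈ Rm m := by simp [Rm]
theorem mem_cmm_st {m : ℕ} : cmm s t ∈ Rm m := by simp [Rm]
theorem mem_sas {m : ℕ} : (s⁻¹ * a * s)⁻¹ * a * (t⁻¹ * a * t) ∈ Rm m := by simp [Rm]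
theorem mem_am {m : ℕ} : a ^ m ∈ Rm m := by simp [Rm]

/-- `st ≈₁ ts`. -/
theorem st_comm {m : ℕ} : Req (Rm m) 1 (s * t) (t * s) :=
  req_congr (by unfold cmm; group) (mul_one _) (req_mul_left (t * s) (req_of_rel mem_cmm_st))

/-- `a · a^t ≈₁ a^t · a`. -/
theorem comm_aA {m : ℕ} : Req (Rm m) 1 (a * (t⁻¹ * a * t)) ((t⁻¹ * a * t) * a) :=
  req_congr (by unfold cmm; group) (mul_one _)
    (req_mul_left ((t⁻¹ * a * t) * a) (req_of_rel mem_cmm_a))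

/-- `s⁻¹ a s ≈₁ a · a^t`. -/
theorem sas_req {m : ℕ} : Req (Rm m) 1 (s⁻¹ * a * s) (a * (t⁻¹ * a * t)) :=
  req_symm (req_congr (by group) (mul_one _)
    (req_mul_left (s⁻¹ * a * s) (req_of_rel mem_sas)))

theorem am_req {m : ℕ} : Req (Rm m) 1 (a ^ m) 1 := req_of_rel mem_am

theorem ts_pow {m : ℕ} : ∀ i : ℕ, Req (Rm m) i (t ^ i * s) (s * t ^ i)
  | 0 => req_of_eq (by group)
  | (i+1) => by
    have h1 : Req (Rm m) 1 (t ^ (i+1) * s) (t ^ i * (s * t)) :=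
      req_congr (by group) (by group) (req_mul_left (t ^ i) (req_symm st_comm))
    have h2 : Req (Rm m) i (t ^ i * (s * t)) (s * t ^ (i+1)) :=
      req_congr (by group) (by group) (req_mul_right t (ts_pow i))
    exact req_mono (by omega) (req_trans h1 h2)

theorem tis_inv {m : ℕ} (i : ℕ) : Req (Rm m) i (s⁻¹ * (t ^ i)⁻¹) ((t ^ i)⁻¹ * s⁻¹) :=
  req_congr (by group) (by group) (req_inv (ts_pow i))

theorem conj_pow' (x y : F) : ∀ c : ℕ, (y⁻¹ * x * y) ^ c = y⁻¹ * x ^ c * y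
  | 0 => by group
  | (c+1) => by rw [pow_succ, pow_succ, conj_pow']; group

theorem req_pow {R k} {w v : F} (h : Req R k w v) : ∀ c : ℕ, Req R (c * k) (w ^ c) (v ^ c)
  | 0 => req_mono (Nat.zero_le _) (req_of_eq rfl)
  | (c+1) => by
    have := req_mul (req_pow h c) h
    exact req_congr (by rw [pow_succ]) (by rw [pow_succ]) (req_mono (by ring_nf; omega) this)

theorem mv {m : ℕ} : ∀ j : ℕ, Req (Rm m) j ((t⁻¹ * a * t) ^ j * a) (a * (t⁻¹ * a * t) ^ j)
  | 0 => req_of_eq (by group)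
  | (j+1) => by
    have h1 : Req (Rm m) 1 ((t⁻¹ * a * t) ^ (j+1) * a) ((t⁻¹ * a * t) ^ j * (a * (t⁻¹ * a * t))) :=
      req_congr (by rw [pow_succ]; group) rfl
        (req_mul_left ((t⁻¹ * a * t) ^ j) (req_symm comm_aA))
    have h2 : Req (Rm m) j ((t⁻¹ * a * t) ^ j * (a * (t⁻¹ * a * t)))
        (a * (t⁻¹ * a * t) ^ (j+1)) :=
      req_congr (by group) (by rw [pow_succ]; group) (req_mul_right (t⁻¹ * a * t) (mv j))
    exact req_mono (by omega) (req_trans h1 h2)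

theorem sort_pow {m : ℕ} : ∀ c : ℕ,
    Req (Rm m) (c * c) ((a * (t⁻¹ * a * t)) ^ c) (a ^ c * (t⁻¹ * a * t) ^ c)
  | 0 => req_of_eq (by group)
  | (c+1) => by
    have h1 : Req (Rm m) (c * c) ((a * (t⁻¹ * a * t)) ^ (c+1))
        (a ^ c * (t⁻¹ * a * t) ^ c * (a * (t⁻¹ * a * t))) :=
      req_congr (by rw [pow_succ]) rfl (req_mul_right (a * (t⁻¹ * a * t)) (sort_pow c))
    have h2 : Req (Rm m) c (a ^ c * (t⁻¹ * a * t) ^ c * (a * (t⁻¹ * a * t)))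
        (a ^ (c+1) * (t⁻¹ * a * t) ^ (c+1)) := by
      have := req_mul_left (a ^ c) (req_mul_right (t⁻¹ * a * t) (mv (m := m) c))
      exact req_congr (by group) (by rw [pow_succ, pow_succ]; group) this
    exact req_mono (by nlinarith) (req_trans h1 h2)

theorem redm {m : ℕ} : ∀ q r : ℕ, Req (Rm m) q (a ^ (m * q + r)) (a ^ r)
  | 0, r => req_of_eq (by norm_num)
  | (q+1), r => by
    have h1 : Req (Rm m) 1 (a ^ (m * (q+1) + r)) (a ^ (m * q + r)) := by
      have := req_mul (am_req (m := m)) (req_refl (a ^ (m * q + r)))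
      exact req_congr (by rw [← pow_add]; ring_nf) (by rw [one_mul]) this
    exact req_mono (by omega) (req_trans h1 (redm q r))

theorem amod {m : ℕ} (hm : 0 < m) (d : ℕ) (hd : d < 2 * m) :
    Req (Rm m) 1 (a ^ d) (a ^ (d % m)) := by
  have h1 := redm (m := m) (d / m) (d % m)
  rw [Nat.div_add_mod] at h1
  refine req_mono ?_ h1
  have : d / m < 2 := (Nat.div_lt_iff_lt_mul hm).2 (by omega)
  omega

theorem stepA {m : ℕ} (i c : ℕ) :
    Req (Rm m) (2 * i + (c + c * c))
      (s⁻¹ * ((t ^ i)⁻¹ * a ^ c * t ^ i) * s)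
      (((t ^ i)⁻¹ * a ^ c * t ^ i) * ((t ^ (i+1))⁻¹ * a ^ c * t ^ (i+1))) := by
  have h1 : Req (Rm m) i (s⁻¹ * ((t ^ i)⁻¹ * a ^ c * t ^ i) * s)
      ((t ^ i)⁻¹ * s⁻¹ * (a ^ c * (t ^ i * s))) :=
    req_congr (by group) (by group) (req_mul_right (a ^ c * t ^ i * s) (tis_inv i))
  have h2 : Req (Rm m) i ((t ^ i)⁻¹ * s⁻¹ * (a ^ c * (t ^ i * s)))
      ((t ^ i)⁻¹ * ((s⁻¹ * a * s) ^ c) * t ^ i) := by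
    have := req_mul_left ((t ^ i)⁻¹ * s⁻¹ * a ^ c) (ts_pow (m := m) i)
    exact req_congr (by group) (by rw [conj_pow']; group) this
  have h3 : Req (Rm m) (c + c * c) ((t ^ i)⁻¹ * ((s⁻¹ * a * s) ^ c) * t ^ i)
      (((t ^ i)⁻¹ * a ^ c * t ^ i) * ((t ^ (i+1))⁻¹ * a ^ c * t ^ (i+1))) := by
    have hc : Req (Rm m) (c + c * c) ((s⁻¹ * a * s) ^ c) (a ^ c * (t⁻¹ * a * t) ^ c) := by
      have := req_trans (req_congr rfl rfl (req_pow (sas_req (m := m)) c)) (sort_pow c)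
      exact req_mono (by omega) this
    have := req_conj (t ^ i) hc
    exact req_congr rfl (by rw [conj_pow' a t c]; group) this
  exact req_mono (by omega) (req_trans h1 (req_trans h2 h3))

theorem wT_succ (m : ℕ) (h : Polynomial ℤ) (N : ℕ) :
    wT m h (N+1) = wT m h N * ((t ^ (N+1))⁻¹ * a ^ cf m h (N+1) * t ^ (N+1)) := by
  unfold wT
  rw [List.range_succ, List.map_append, List.prod_append]
  simp

theorem cf_lt {m : ℕ} (hm : 0 < m) (h : Polynomial ℤ) (i : ℕ) : cf m h i < m := by
  unfold cf
  have h1 : (0:ℤ) < (m:ℤ) := by exact_mod_cast hm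
  have h2 := Int.emod_lt_of_pos (h.coeff i) h1
  have h3 := Int.emod_nonneg (h.coeff i) (Int.natCast_ne_zero.mpr hm.ne')
  omega

theorem cf_eq_zero {m : ℕ} {h : Polynomial ℤ} {i : ℕ} (hi : h.natDegree < i) :
    cf m h i = 0 := by
  unfold cf
  rw [Polynomial.coeff_eq_zero_of_natDegree_lt hi]
  simp

theorem wT_pad (m : ℕ) (h : Polynomial ℤ) {N N' : ℕ} (hN : h.natDegree ≤ N) (hN' : N ≤ N') :
    wT m h N' = wT m h N := by
  induction N', hN' using Nat.le_induction with
  | base => rfl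
  | succ n hn ih =>
    rw [wT_succ, cf_eq_zero (by omega), ih]
    simp

def mid (m : ℕ) (h : Polynomial ℤ) (N : ℕ) : F :=
  ((List.range N).map (fun j => (t ^ (j+1))⁻¹ * a ^ (cf m h (j+1) + cf m h j) * t ^ (j+1))).prod

def wD (m : ℕ) (h : Polynomial ℤ) (N : ℕ) : F :=
  a ^ cf m h 0 * mid m h N * ((t ^ (N+1))⁻¹ * a ^ cf m h N * t ^ (N+1))

theorem mid_succ (m : ℕ) (h : Polynomial ℤ) (N : ℕ) :
    mid m h (N+1) = mid m h N *
      ((t ^ (N+1))⁻¹ * a ^ (cf m h (N+1) + cf m h N) * t ^ (N+1)) := by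
  unfold mid
  rw [List.range_succ, List.map_append, List.prod_append]
  simp

theorem stepB {m : ℕ} (hm : 0 < m) (h : Polynomial ℤ) :
    ∀ N : ℕ, Req (Rm m) ((N+1) * (2*N + m + m*m)) (s⁻¹ * wT m h N * s) (wD m h N)
  | 0 => by
    have h1 := stepA (m := m) 0 (cf m h 0)
    have hc : cf m h 0 < m := cf_lt hm h 0
    refine req_mono (by nlinarith) (req_congr ?_ ?_ h1)
    · unfold wT; simp [List.range_succ]
    · unfold wD mid; simp [List.range_succ]
  | (N+1) => by
    have hsplit : s⁻¹ * wT m h (N+1) * s =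
        (s⁻¹ * wT m h N * s) * (s⁻¹ * ((t ^ (N+1))⁻¹ * a ^ cf m h (N+1) * t ^ (N+1)) * s) := by
      rw [wT_succ]; group
    have h1 := req_mul (stepB hm h N) (stepA (m := m) (N+1) (cf m h (N+1)))
    have hc : cf m h (N+1) < m := cf_lt hm h (N+1)
    refine req_mono (by nlinarith) (req_congr hsplit.symm ?_ h1)
    unfold wD
    rw [mid_succ, pow_add]
    group

open Polynomial in
theorem coeff_X1_succ (h : Polynomial ℤ) (j : ℕ) :
    ((X + 1) * h).coeff (j+1) = h.coeff j + h.coeff (j+1) := by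
  rw [add_mul, one_mul, Polynomial.coeff_add, Polynomial.coeff_X_mul]

open Polynomial in
theorem coeff_X1_zero (h : Polynomial ℤ) : ((X + 1) * h).coeff 0 = h.coeff 0 := by
  rw [Polynomial.mul_coeff_zero]
  simp

open Polynomial in
theorem cf_X1_zero (m : ℕ) (h : Polynomial ℤ) : cf m ((X + 1) * h) 0 = cf m h 0 := by
  unfold cf
  rw [coeff_X1_zero]

open Polynomial in
theorem cf_X1_succ {m : ℕ} (hm : 0 < m) (h : Polynomial ℤ) (j : ℕ) :
    cf m ((X + 1) * h) (j+1) = (cf m h (j+1) + cf m h j) % m := by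
  unfold cf
  rw [coeff_X1_succ]
  have hm' : ((m:ℤ)) ≠ 0 := Int.natCast_ne_zero.mpr hm.ne'
  set x := h.coeff j
  set y := h.coeff (j+1)
  have h1 : (x + y) % (m:ℤ) = ((x % m) + (y % m)) % m := by
    rw [Int.add_emod]
  have hx : (0:ℤ) ≤ x % m := Int.emod_nonneg x hm'
  have hy : (0:ℤ) ≤ y % m := Int.emod_nonneg y hm'
  have h2 : ((x % m) + (y % m)) % (m:ℤ) =
      (((y % (m:ℤ)).toNat + (x % (m:ℤ)).toNat) % m : ℕ) := by
    push_cast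
    rw [Int.toNat_of_nonneg hx, Int.toNat_of_nonneg hy]
    ring_nf
  rw [h1, h2]
  exact Int.toNat_natCast _

theorem wT_split (m : ℕ) (p : Polynomial ℤ) (N : ℕ) :
    wT m p (N+1) = a ^ cf m p 0 *
      ((List.range N).map (fun j => (t ^ (j+1))⁻¹ * a ^ cf m p (j+1) * t ^ (j+1))).prod *
      ((t ^ (N+1))⁻¹ * a ^ cf m p (N+1) * t ^ (N+1)) := by
  rw [wT_succ]
  congr 1
  unfold wT
  rw [List.range_succ_eq_map, List.map_cons, List.prod_cons, List.map_map]
  simp [Function.comp_def]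

theorem prod_req1 {R : Set F} (p q : ℕ → F) :
    ∀ NN : ℕ, (∀ j, j < NN → Req R 1 (p j) (q j)) →
    Req R NN (((List.range NN).map p).prod) (((List.range NN).map q).prod)
  | 0, _ => req_of_eq (by simp)
  | (NN+1), hp => by
    have h1 := req_mul (prod_req1 p q NN (fun j hj => hp j (by omega))) (hp NN (by omega))
    refine req_congr ?_ ?_ h1 <;>
      rw [List.range_succ, List.map_append, List.prod_append] <;> simp

open Polynomial in
theorem stepC {m : ℕ} (hm : 0 < m) (h : Polynomial ℤ) (N : ℕ) (hN : h.natDegree ≤ N) :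
    Req (Rm m) N (wD m h N) (wT m ((X + 1) * h) (N+1)) := by
  rw [wT_split]
  unfold wD mid
  rw [cf_X1_zero]
  have hlast : cf m ((X+1)*h) (N+1) = cf m h N := by
    rw [cf_X1_succ hm h N, cf_eq_zero (by omega), zero_add,
      Nat.mod_eq_of_lt (cf_lt hm h N)]
  rw [hlast]
  refine req_mul_right _ (req_mul_left _ ?_)
  refine prod_req1 _ _ N (fun j hj => ?_)
  have hd : cf m h (j+1) + cf m h j < 2 * m := by
    have := cf_lt hm h (j+1); have := cf_lt hm h j; omega
  have h1 := req_conj (t ^ (j+1)) (amod (m := m) hm _ hd)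
  rw [cf_X1_succ hm h j]
  exact h1

open Polynomial in
theorem L1 {m : ℕ} (hm : 0 < m) (h : Polynomial ℤ) (N : ℕ) (hN : h.natDegree ≤ N) :
    Req (Rm m) ((N+1) * (2*N + m + m*m) + N)
      (wT m ((X + 1) * h) (N+1)) (s⁻¹ * wT m h N * s) :=
  req_symm (req_trans (stepB hm h N) (stepC hm h N hN))

open Polynomial in
theorem natDeg_X1_mul (h : Polynomial ℤ) : ((X + 1) * h : Polynomial ℤ).natDegree ≤ 1 + h.natDegree := by
  have h1 : ((X : Polynomial ℤ) + 1).natDegree ≤ 1 := by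
    refine le_trans (Polynomial.natDegree_add_le _ _) ?_
    simp
  have h2 := Polynomial.natDegree_mul_le (p := (X : Polynomial ℤ) + 1) (q := h)
  omega

open Polynomial in
theorem bridge {m : ℕ} (hm : 0 < m) (f g : Polynomial ℤ) :
    Req (Rm m)
      (3 * ((max f.natDegree g.natDegree + 1) *
        (2 * max f.natDegree g.natDegree + m + m * m) + max f.natDegree g.natDegree))
      (tau m ((X + 1) * f) ((X + 1) * g)) (s⁻¹ * tau m f g * s) := by
  set M := max f.natDegree g.natDegree with hM
  have hf : f.natDegree ≤ M := le_max_left _ _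
  have hg : g.natDegree ≤ M := le_max_right _ _
  have hfg : (f + g).natDegree ≤ M := le_trans (Polynomial.natDegree_add_le f g) (by omega)
  have h1 := L1 hm f M hf
  have h2 := L1 hm g M hg
  have h3 := L1 hm (f + g) M hfg
  have hcomb := req_mul (req_mul h1 h2) (req_inv h3)
  refine req_mono (by omega) (req_congr ?_ ?_ hcomb)
  · have e : ((X : Polynomial ℤ) + 1) * f + (X + 1) * g = (X + 1) * (f + g) := by ring
    unfold tau
    rw [e]
    rw [wT_pad m ((X + 1) * f) (le_refl _) (le_trans (natDeg_X1_mul f) (by omega)),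
      wT_pad m ((X + 1) * g) (le_refl _) (le_trans (natDeg_X1_mul g) (by omega)),
      wT_pad m ((X + 1) * (f + g)) (le_refl _) (le_trans (natDeg_X1_mul (f + g)) (by omega))]
  · unfold tau
    rw [wT_pad m f (le_refl _) hf, wT_pad m g (le_refl _) hg,
      wT_pad m (f + g) (le_refl _) hfg]
    group


open Polynomial in
/-- Lemma 4.3: for `m ≥ 2` and `f, g ∈ ℤ[x]`, with `n = 1 + max{deg f, deg g}`, one
has `Area(τ_{(x+1)f, (x+1)g}) ≤ Area(τ_{f,g}) + 6·K_m(n)`, areas being taken with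
respect to the presentation of `Γ_m`. -/
theorem reduce_degree_lemma (m : ℕ) (hm : 2 ≤ m) (f g : Polynomial ℤ) :
    area (Rm m) (tau m ((X + 1) * f) ((X + 1) * g)) ≤
      area (Rm m) (tau m f g) + 6 * Km m (1 + max f.natDegree g.natDegree) := by
  classical
  have hm0 : 0 < m := by omega
  set M := max f.natDegree g.natDegree with hM
  set τ := tau m f g with hτ
  set τ' := tau m ((X + 1) * f) ((X + 1) * g) with hτ'
  have hbr : Req (Rm m) (3 * ((M + 1) * (2 * M + m + m * m) + M)) τ' (s⁻¹ * τ * s) :=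
    bridge hm0 f g
  set B := 3 * ((M + 1) * (2 * M + m + m * m) + M) with hB
  have hB6 : B ≤ 6 * Km m (1 + M) := by
    unfold Km
    rw [hB, pow_two, pow_two]
    have e1 : m ≤ m * m := Nat.le_mul_of_pos_left m hm0
    have e2 : M + 1 ≤ (M + 1) * (M + 1) := Nat.le_mul_of_pos_left _ (by omega)
    nlinarith [e1, e2, Nat.zero_le M]
  rcases Set.eq_empty_or_nonempty {N : ℕ | IsConjProd (Rm m) N τ'} with he | hne
  · unfold area
    rw [he, Nat.sInf_empty]
    exact Nat.zero_le _
  · obtain ⟨N₀, hN₀⟩ := hne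
    have bnd0 : Bnd (Rm m) N₀ τ' := bnd_of_isConjProd hN₀
    have hbnd : Bnd (Rm m) B (τ' * (s⁻¹ * τ * s)⁻¹) := hbr
    have bndst : Bnd (Rm m) (B + N₀) (s⁻¹ * τ * s) := by
      have h := bnd_mul (bnd_inv hbnd) bnd0
      have e : (τ' * (s⁻¹ * τ * s)⁻¹)⁻¹ * τ' = s⁻¹ * τ * s := by group
      rwa [e] at h
    have bndτ : Bnd (Rm m) (B + N₀) τ := by
      have h := bnd_conj s bndst
      have e : s * (s⁻¹ * τ * s) * s⁻¹ = τ := by group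
      rwa [e] at h
    have hSτ : {N : ℕ | IsConjProd (Rm m) N τ}.Nonempty := by
      obtain ⟨N, _, hN⟩ := isConjProd_of_bnd bndτ
      exact ⟨N, hN⟩
    have hmem : IsConjProd (Rm m) (area (Rm m) τ) τ := Nat.sInf_mem hSτ
    have bndst2 : Bnd (Rm m) (area (Rm m) τ) (s⁻¹ * τ * s) := by
      have h := bnd_conj s⁻¹ (bnd_of_isConjProd hmem)
      have e : s⁻¹ * τ * s⁻¹⁻¹ = s⁻¹ * τ * s := by group
      rwa [e] at h
    have bndτ' : Bnd (Rm m) (B + area (Rm m) τ) τ' := by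
      have h := bnd_mul hbnd bndst2
      have e : τ' * (s⁻¹ * τ * s)⁻¹ * (s⁻¹ * τ * s) = τ' := by group
      rwa [e] at h
    obtain ⟨N, hNle, hN⟩ := isConjProd_of_bnd bndτ'
    have harea : area (Rm m) τ' ≤ N := Nat.sInf_le hN
    omega
end
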